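/- arXiv:1903.02518 — 9 statements merged into one kernel-verified Lean document; each statement's English description precedes it below -/
import Mathlib

section
/- Suppose at least one SCC of the dependence graph of A is super-critical. Then A has an eigenvalue with positive real part, and the linear system dm/dt = A·m is unstable: there exists x₀ ∈ ℝⁿ such that ‖exp(tA)·x₀‖ → ∞ as t → ∞. -/
open Matrix Filter Topology Polynomial

attribute [local instance] Classical.propDecidable

/-- There is a directed edge from `a` to `b` in the dependence graph `G(A)`:
an edge from `j` to `i` whenever `i ≠ j` and `A i j ≠ 0`. -/
def Edge {n : ℕ} (A : Matrix (Fin n) (Fin n) ℝ) (a b : Fin n) : Prop :=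
  a ≠ b ∧ A b a ≠ 0

/-- `i` reaches `j`: reflexive–transitive closure of the edge relation. -/
def Reaches {n : ℕ} (A : Matrix (Fin n) (Fin n) ℝ) : Fin n → Fin n → Prop :=
  Relation.ReflTransGen (Edge A)

/-- Mutual reachability. -/
def Mutual {n : ℕ} (A : Matrix (Fin n) (Fin n) ℝ) (i j : Fin n) : Prop :=
  Reaches A i j ∧ Reaches A j i

/-- `S` is a strongly connected component of `G(A)`:
an equivalence class of the mutual-reachability relation. -/
def IsSCC {n : ℕ} (A : Matrix (Fin n) (Fin n) ℝ) (S : Set (Fin n)) : Prop :=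
  ∃ i : Fin n, S = {j | Mutual A i j}

/-- The block `A_S`: the principal submatrix of `A` on rows and columns indexed by `S`. -/
def block {n : ℕ} (A : Matrix (Fin n) (Fin n) ℝ) (S : Set (Fin n)) : Matrix S S ℝ :=
  A.submatrix Subtype.val Subtype.val

/-- The eigenvalues of a real square matrix: complex roots of its characteristic polynomial. -/
def IsEigenvalue {m : Type*} [Fintype m] [DecidableEq m]
    (M : Matrix m m ℝ) (z : ℂ) : Prop :=
  ((M.charpoly).map (algebraMap ℝ ℂ)).IsRoot z

/-- `A` is a Metzler matrix. -/
def Metzler {n : ℕ} (A : Matrix (Fin n) (Fin n) ℝ) : Prop :=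
  ∀ i j, i ≠ j → 0 ≤ A i j

/-- `S` is sub-critical: every eigenvalue of `A_S` has negative real part. -/
def SubCritical {n : ℕ} (A : Matrix (Fin n) (Fin n) ℝ) (S : Set (Fin n)) : Prop :=
  ∀ z : ℂ, IsEigenvalue (block A S) z → z.re < 0

/-- `S` is critical: `0` is an eigenvalue of `A_S` and all eigenvalues of `A_S` have
nonpositive real part. -/
def Critical {n : ℕ} (A : Matrix (Fin n) (Fin n) ℝ) (S : Set (Fin n)) : Prop :=
  IsEigenvalue (block A S) 0 ∧ ∀ z : ℂ, IsEigenvalue (block A S) z → z.re ≤ 0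

/-- `S` is super-critical: `A_S` has an eigenvalue with positive real part. -/
def SuperCritical {n : ℕ} (A : Matrix (Fin n) (Fin n) ℝ) (S : Set (Fin n)) : Prop :=
  ∃ z : ℂ, IsEigenvalue (block A S) z ∧ 0 < z.re

/-- `m` is a nonnegative fixed point of `A`. -/
def NonnegFixedPoint {n : ℕ} (A : Matrix (Fin n) (Fin n) ℝ) (m : Fin n → ℝ) : Prop :=
  (∀ i, 0 ≤ m i) ∧ A *ᵥ m = 0

/-- `S` is trivial: every nonnegative fixed point vanishes on every vertex of `S`. -/
def TrivialSCC {n : ℕ} (A : Matrix (Fin n) (Fin n) ℝ) (S : Set (Fin n)) : Prop :=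
  ∀ m : Fin n → ℝ, NonnegFixedPoint A m → ∀ i ∈ S, m i = 0

/-- `S` is upstream of `T` (and `T` downstream of `S`). -/
def Upstream {n : ℕ} (A : Matrix (Fin n) (Fin n) ℝ) (S T : Set (Fin n)) : Prop :=
  ∃ i ∈ S, ∃ j ∈ T, Reaches A i j

/-- `S` is immediately upstream of `T`. -/
def ImmediatelyUpstream {n : ℕ} (A : Matrix (Fin n) (Fin n) ℝ) (S T : Set (Fin n)) : Prop :=
  S ≠ T ∧ ∃ i ∈ S, ∃ j ∈ T, Edge A i j

/-- The matrix exponential `exp M = ∑ M^k / k!`. -/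
noncomputable def mexp {n : ℕ} (M : Matrix (Fin n) (Fin n) ℝ) : Matrix (Fin n) (Fin n) ℝ :=
  ∑' k : ℕ, ((k.factorial : ℝ)⁻¹) • M ^ k

section AuxiliaryLemmas

lemma entry_bound' {N : ℕ} (M : Matrix (Fin N) (Fin N) ℝ) :
    ∃ C : ℝ, 1 ≤ C ∧ ∀ (k : ℕ) (i j : Fin N), |(M ^ k) i j| ≤ C ^ k := by
  refine ⟨1 + ∑ p, ∑ q, |M p q|, le_add_of_nonneg_right (by positivity), ?_⟩
  intro k
  induction k with
  | zero =>
    intro i j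
    rw [pow_zero, pow_zero]
    rcases eq_or_ne i j with h | h <;> simp [Matrix.one_apply, h]
  | succ k ih =>
    intro i j
    rw [pow_succ', Matrix.mul_apply, pow_succ']
    calc |∑ l, M i l * (M ^ k) l j| ≤ ∑ l, |M i l * (M ^ k) l j| :=
          Finset.abs_sum_le_sum_abs _ _
    _ ≤ ∑ l, |M i l| * (1 + ∑ p, ∑ q, |M p q|) ^ k := by
          refine Finset.sum_le_sum fun l _ => ?_
          rw [abs_mul]
          exact mul_le_mul_of_nonneg_left (ih l j) (abs_nonneg _)
    _ = (∑ l, |M i l|) * (1 + ∑ p, ∑ q, |M p q|) ^ k := (Finset.sum_mul _ _ _).symm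
    _ ≤ (1 + ∑ p, ∑ q, |M p q|) * (1 + ∑ p, ∑ q, |M p q|) ^ k := by
          refine mul_le_mul_of_nonneg_right ?_ (by positivity)
          have h1 : (∑ l, |M i l|) ≤ ∑ p, ∑ q, |M p q| :=
            Finset.single_le_sum (f := fun p => ∑ q, |M p q|)
              (fun p _ => by positivity) (Finset.mem_univ i)
          linarith

lemma summable_entry' {N : ℕ} {M : Matrix (Fin N) (Fin N) ℝ} {C : ℝ}
    (hC : ∀ (k : ℕ) (i j : Fin N), |(M ^ k) i j| ≤ C ^ k) (i j : Fin N) :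
    Summable (fun k : ℕ => (k.factorial : ℝ)⁻¹ * (M ^ k) i j) := by
  have hg : Summable (fun k : ℕ => C ^ k / (k.factorial : ℝ)) :=
    Real.summable_pow_div_factorial C
  refine Summable.of_norm_bounded hg fun k => ?_
  rw [Real.norm_eq_abs, abs_mul, abs_inv, Nat.abs_cast, div_eq_inv_mul]
  exact mul_le_mul_of_nonneg_left (hC k i j) (by positivity)

lemma mexp_entry {N : ℕ} (M : Matrix (Fin N) (Fin N) ℝ) (i j : Fin N) :
    mexp M i j = ∑' k : ℕ, (k.factorial : ℝ)⁻¹ * (M ^ k) i j := by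
  obtain ⟨C, hC1, hC⟩ := entry_bound' M
  have hg : HasSum (fun k : ℕ => ((k.factorial : ℝ)⁻¹) • M ^ k)
      (Matrix.of fun i j => ∑' k : ℕ, (k.factorial : ℝ)⁻¹ * (M ^ k) i j) := by
    refine Pi.hasSum.mpr fun i => Pi.hasSum.mpr fun j => ?_
    simpa [Matrix.smul_apply] using (summable_entry' hC i j).hasSum
  rw [mexp, hg.tsum_eq]
  rfl

lemma map_pow_ofReal {N : ℕ} (M : Matrix (Fin N) (Fin N) ℝ) (k : ℕ) :
    (M.map (algebraMap ℝ ℂ)) ^ k = (M ^ k).map (algebraMap ℝ ℂ) := by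
  have := map_pow ((algebraMap ℝ ℂ).mapMatrix) M k
  simpa [RingHom.mapMatrix_apply] using this.symm

lemma mulVec_pow_eigen {N : ℕ} {B : Matrix (Fin N) (Fin N) ℂ} {v : Fin N → ℂ} {z : ℂ}
    (hv : B *ᵥ v = z • v) (k : ℕ) : B ^ k *ᵥ v = z ^ k • v := by
  induction k with
  | zero => simp
  | succ k ih =>
    rw [pow_succ', ← Matrix.mulVec_mulVec, ih, Matrix.mulVec_smul, hv, smul_smul, ← pow_succ]

lemma mexp_mulVec_complex {N : ℕ} (M : Matrix (Fin N) (Fin N) ℝ) (v : Fin N → ℂ) (z : ℂ)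
    (hv : M.map (algebraMap ℝ ℂ) *ᵥ v = z • v) (i : Fin N) :
    (∑ j, (algebraMap ℝ ℂ) (mexp M i j) * v j) = Complex.exp z * v i := by
  set B := M.map (algebraMap ℝ ℂ) with hB
  obtain ⟨C, hC1, hC⟩ := entry_bound' M
  have hBnorm : ∀ (k : ℕ) (i j : Fin N), ‖(B ^ k) i j‖ ≤ C ^ k := by
    intro k i j
    rw [hB, map_pow_ofReal]
    simpa [Matrix.map_apply] using hC k i j
  have hsumB : ∀ j : Fin N,
      Summable (fun k : ℕ => (k.factorial : ℂ)⁻¹ * (B ^ k) i j * v j) := by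
    intro j
    have hg : Summable (fun k : ℕ => C ^ k / (k.factorial : ℝ) * ‖v j‖) :=
      (Real.summable_pow_div_factorial C).mul_right _
    refine Summable.of_norm_bounded hg fun k => ?_
    rw [norm_mul, norm_mul]
    refine mul_le_mul_of_nonneg_right ?_ (norm_nonneg _)
    rw [div_eq_inv_mul]
    have h1 : ‖((k.factorial : ℂ))⁻¹‖ = ((k.factorial : ℝ))⁻¹ := by
      rw [norm_inv]
      norm_num
    rw [h1]
    exact mul_le_mul_of_nonneg_left (hBnorm k i j) (by positivity)
  have step1 : (∑ j, (algebraMap ℝ ℂ) (mexp M i j) * v j)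
      = ∑ j, (∑' k : ℕ, (k.factorial : ℂ)⁻¹ * (B ^ k) i j) * v j := by
    refine Finset.sum_congr rfl fun j _ => ?_
    congr 1
    rw [mexp_entry]
    rw [show (algebraMap ℝ ℂ) = Complex.ofReal from rfl, Complex.ofReal_tsum]
    refine tsum_congr fun k => ?_
    rw [hB, map_pow_ofReal]
    push_cast
    simp [Matrix.map_apply]
  rw [step1]
  have step2 : ∀ j, (∑' k : ℕ, (k.factorial : ℂ)⁻¹ * (B ^ k) i j) * v j
      = ∑' k : ℕ, (k.factorial : ℂ)⁻¹ * (B ^ k) i j * v j := fun j => (tsum_mul_right).symm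
  simp_rw [step2]
  rw [← Summable.tsum_finsetSum (fun j _ => hsumB j)]
  have step3 : ∀ k : ℕ, (∑ j, (k.factorial : ℂ)⁻¹ * (B ^ k) i j * v j)
      = (k.factorial : ℂ)⁻¹ * z ^ k * v i := by
    intro k
    have h1 : (∑ j, (k.factorial : ℂ)⁻¹ * (B ^ k) i j * v j)
        = (k.factorial : ℂ)⁻¹ * ∑ j, (B ^ k) i j * v j := by
      rw [Finset.mul_sum]
      refine Finset.sum_congr rfl fun j _ => by ring
    have h2 : (∑ j, (B ^ k) i j * v j) = (B ^ k *ᵥ v) i := rfl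
    rw [h1, h2, mulVec_pow_eigen hv k]
    simp [Pi.smul_apply, smul_eq_mul]
    ring
  simp_rw [step3]
  have step4 : (∑' k : ℕ, (k.factorial : ℂ)⁻¹ * z ^ k * v i)
      = (∑' k : ℕ, (k.factorial : ℂ)⁻¹ * z ^ k) * v i := tsum_mul_right
  rw [step4]
  congr 1
  rw [Complex.exp_eq_exp_ℂ, NormedSpace.exp_eq_tsum (𝕂 := ℂ)]
  simp [smul_eq_mul]

lemma exists_eigenvector {N : ℕ} (M : Matrix (Fin N) (Fin N) ℝ) (z : ℂ)
    (h : IsEigenvalue M z) :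
    ∃ v : Fin N → ℂ, v ≠ 0 ∧ M.map (algebraMap ℝ ℂ) *ᵥ v = z • v := by
  classical
  set B := M.map (algebraMap ℝ ℂ) with hB
  have hroot : B.charpoly.IsRoot z := by
    rw [hB, Matrix.charpoly_map]
    exact h
  have hdet : (z • (1 : Matrix (Fin N) (Fin N) ℂ) - B).det = 0 := by
    have h1 := (RingHom.map_det (Polynomial.evalRingHom z) (charmatrix B)).symm
    simp only [RingHom.mapMatrix_apply] at h1
    have h2 : (charmatrix B).map (Polynomial.evalRingHom z)
        = z • (1 : Matrix (Fin N) (Fin N) ℂ) - B := by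
      ext i j
      rcases eq_or_ne i j with hij | hij <;>
        simp [charmatrix_apply, Matrix.map_apply, Matrix.one_apply, Matrix.smul_apply,
          Matrix.sub_apply, Matrix.diagonal, hij]
    rw [h2] at h1
    rw [h1]
    simpa [Matrix.charpoly] using hroot
  obtain ⟨v, hv0, hveq⟩ := (Matrix.exists_mulVec_eq_zero_iff).mpr hdet
  refine ⟨v, hv0, ?_⟩
  rw [Matrix.sub_mulVec, Matrix.smul_mulVec, Matrix.one_mulVec, sub_eq_zero] at hveq
  exact hveq.symm

lemma mexp_mulVec_re {N : ℕ} (M : Matrix (Fin N) (Fin N) ℝ) (v : Fin N → ℂ) (z : ℂ)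
    (hv : M.map (algebraMap ℝ ℂ) *ᵥ v = z • v) (i : Fin N) :
    (mexp M *ᵥ (fun j => (v j).re)) i
      = Real.exp z.re * (Real.cos z.im * (v i).re - Real.sin z.im * (v i).im) := by
  have h1 : (mexp M *ᵥ (fun j => (v j).re)) i
      = ∑ j, ((algebraMap ℝ ℂ) (mexp M i j) * v j).re := by
    simp [Matrix.mulVec, dotProduct, Complex.mul_re]
  rw [h1, ← Complex.re_sum, mexp_mulVec_complex M v z hv i, Complex.mul_re,
    Complex.exp_re, Complex.exp_im]
  ring

lemma charpoly_factor {m : Type*} [Fintype m] [DecidableEq m]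
    {R : Type*} [CommRing R] (M : Matrix m m R) (p : m → Prop) [DecidablePred p]
    (h : ∀ i j, ¬ p i → p j → M i j = 0) :
    M.charpoly = (M.submatrix (Subtype.val : {x // p x} → m) Subtype.val).charpoly *
      (M.submatrix (Subtype.val : {x // ¬ p x} → m) Subtype.val).charpoly := by
  classical
  set e := Equiv.sumCompl p with he
  have h0 : M.charpoly = (M.submatrix e e).charpoly := by
    have : M.submatrix e e = Matrix.reindex e.symm e.symm M := by
      ext i j; simp [Matrix.reindex_apply, Matrix.submatrix_apply]
    rw [this, Matrix.charpoly_reindex]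
  have key : M.submatrix (e : _ → m) e = Matrix.fromBlocks
      (M.submatrix Subtype.val Subtype.val) (M.submatrix Subtype.val Subtype.val)
      0 (M.submatrix Subtype.val Subtype.val) := by
    ext i j
    cases i with
    | inl i =>
      cases j with
      | inl j => simp [he]
      | inr j => simp [he]
    | inr i =>
      cases j with
      | inl j => simp [he, h i.1 j.1 i.2 j.2]
      | inr j => simp [he]
  rw [h0, key, Matrix.charpoly_fromBlocks_zero₂₁]

lemma charpoly_block_dvd {n : ℕ} (A : Matrix (Fin n) (Fin n) ℝ) (S : Set (Fin n))
    (hS : IsSCC A S) : (block A S).charpoly ∣ A.charpoly := by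
  obtain ⟨i0, hSdef⟩ := hS
  have mem_iff : ∀ j : Fin n, j ∈ S ↔ (Reaches A i0 j ∧ Reaches A j i0) := by
    intro j; rw [hSdef]; exact Iff.rfl
  set p : Fin n → Prop := fun j => Reaches A i0 j with hp
  have h1 : ∀ i j, ¬ p i → p j → A i j = 0 := by
    intro i j hi hj
    by_contra hij
    have hne : j ≠ i := by rintro rfl; exact hi hj
    exact hi (Relation.ReflTransGen.tail hj ⟨hne, hij⟩)
  have e1 := charpoly_factor A p h1
  set M1 := A.submatrix (Subtype.val : {x // p x} → Fin n) Subtype.val with hM1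
  set q : {x // p x} → Prop := fun x => ¬ Reaches A x.1 i0 with hq
  have h2 : ∀ i j : {x // p x}, ¬ q i → q j → M1 i j = 0 := by
    intro i j hi hj
    by_contra hij
    have hi' : Reaches A i.1 i0 := not_not.mp hi
    have hne : j.1 ≠ i.1 := by
      intro hji
      exact hj (by rw [hji]; exact hi')
    exact hj (Relation.ReflTransGen.trans (Relation.ReflTransGen.single ⟨hne, hij⟩) hi')
  have e2 := charpoly_factor M1 q h2
  let f : {y : {x // p x} // ¬ q y} ≃ {x // x ∈ S} :=
  { toFun := fun y => ⟨y.1.1, (mem_iff _).mpr ⟨y.1.2, not_not.mp y.2⟩⟩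
    invFun := fun s => ⟨⟨s.1, ((mem_iff _).mp s.2).1⟩, not_not.mpr ((mem_iff _).mp s.2).2⟩
    left_inv := fun y => rfl
    right_inv := fun s => rfl }
  have e3 : (M1.submatrix (Subtype.val : {y // ¬ q y} → {x // p x}) Subtype.val).charpoly
      = (block A S).charpoly := by
    have hsub : M1.submatrix (Subtype.val : {y // ¬ q y} → {x // p x}) Subtype.val
        = Matrix.reindex f.symm f.symm (block A S) := by
      ext y y'
      rfl
    rw [hsub, Matrix.charpoly_reindex]
  refine ⟨(M1.submatrix (Subtype.val : {y // q y} → {x // p x}) Subtype.val).charpoly *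
    (A.submatrix (Subtype.val : {x // ¬ p x} → Fin n) Subtype.val).charpoly, ?_⟩
  rw [e1, e2, e3]
  ring

lemma isEigenvalue_of_block {n : ℕ} {A : Matrix (Fin n) (Fin n) ℝ} {S : Set (Fin n)}
    (hS : IsSCC A S) {z : ℂ} (hz : IsEigenvalue (block A S) z) : IsEigenvalue A z := by
  obtain ⟨c, hc⟩ := charpoly_block_dvd A S hS
  unfold IsEigenvalue at hz ⊢
  rw [hc, Polynomial.map_mul]
  simp only [Polynomial.IsRoot, Polynomial.eval_mul] at hz ⊢
  rw [hz, zero_mul]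

end AuxiliaryLemmas

/-- if some SCC is super-critical then `A` has an eigenvalue with positive
real part and the system `dm/dt = A m` is unstable. -/
theorem unstable_of_superCritical_scc (n : ℕ) (hn : 1 ≤ n)
    (A : Matrix (Fin n) (Fin n) ℝ) (hA : Metzler A)
    (S : Set (Fin n)) (hS : IsSCC A S) (hsup : SuperCritical A S) :
    (∃ z : ℂ, IsEigenvalue A z ∧ 0 < z.re) ∧
    ∃ x₀ : Fin n → ℝ,
      Filter.Tendsto (fun t : ℝ => ‖mexp (t • A) *ᵥ x₀‖) Filter.atTop Filter.atTop := by
  obtain ⟨z0, hz0, hz0re⟩ := hsup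
  have hz0A : IsEigenvalue A z0 := isEigenvalue_of_block hS hz0
  refine ⟨⟨z0, hz0A, hz0re⟩, ?_⟩
  obtain ⟨v, hv0, hv⟩ := exists_eigenvector A z0 hz0A
  -- The key pointwise formula for any complexified eigenpair.
  have key : ∀ (w : Fin n → ℂ) (z : ℂ), A.map (algebraMap ℝ ℂ) *ᵥ w = z • w →
      ∀ (t : ℝ) (i : Fin n), (mexp (t • A) *ᵥ (fun j => (w j).re)) i
        = Real.exp (t * z.re) *
          (Real.cos (t * z.im) * (w i).re - Real.sin (t * z.im) * (w i).im) := by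
    intro w z hw t i
    have hsm : (t • A).map (algebraMap ℝ ℂ) *ᵥ w = ((t : ℂ) * z) • w := by
      have hmap : (t • A).map (algebraMap ℝ ℂ) = (t : ℂ) • A.map (algebraMap ℝ ℂ) := by
        ext i' j'
        simp [Matrix.map_apply, Matrix.smul_apply]
      rw [hmap, Matrix.smul_mulVec, hw, smul_smul]
    have h := mexp_mulVec_re (t • A) w ((t : ℂ) * z) hsm i
    have hre : ((t : ℂ) * z).re = t * z.re := by simp [Complex.mul_re]
    have him : ((t : ℂ) * z).im = t * z.im := by simp [Complex.mul_im]
    rw [hre, him] at h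
    exact h
  by_cases hdeg : ∃ θ : ℝ, ∀ i, Real.cos θ * (v i).re - Real.sin θ * (v i).im = 0
  · -- degenerate case: the eigenvalue is real and there is a real eigenvector
    obtain ⟨θ, hθ⟩ := hdeg
    set c : ℂ := Complex.exp (θ * Complex.I) with hc
    have hcne : c ≠ 0 := Complex.exp_ne_zero _
    set w : Fin n → ℂ := c • v with hwdef
    have hwne : w ≠ 0 := smul_ne_zero hcne hv0
    have hw : A.map (algebraMap ℝ ℂ) *ᵥ w = z0 • w := by
      rw [hwdef, Matrix.mulVec_smul, hv, smul_comm]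
    have hre0 : ∀ i, (w i).re = 0 := by
      intro i
      have : (w i) = c * v i := rfl
      rw [this, Complex.mul_re, hc, Complex.exp_ofReal_mul_I_re, Complex.exp_ofReal_mul_I_im]
      exact hθ i
    set u : Fin n → ℝ := fun i => (w i).im with hu
    set u' : Fin n → ℂ := fun i => ((u i : ℝ) : ℂ) with hu'
    have hwu : w = Complex.I • u' := by
      funext i
      apply Complex.ext
      · simp [hre0 i, hu', Complex.mul_re]
      · simp [hu', hu, Complex.mul_im]
    have hune : u ≠ 0 := by
      intro h0
      apply hwne
      funext i
      apply Complex.ext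
      · exact hre0 i
      · simpa [hu] using congrFun h0 i
    have hvequ : A.map (algebraMap ℝ ℂ) *ᵥ u' = z0 • u' := by
      have h1 : A.map (algebraMap ℝ ℂ) *ᵥ (Complex.I • u')
          = Complex.I • (A.map (algebraMap ℝ ℂ) *ᵥ u') := Matrix.mulVec_smul _ _ _
      have h2 : z0 • (Complex.I • u') = Complex.I • (z0 • u') := smul_comm _ _ _
      have h3 : Complex.I • (A.map (algebraMap ℝ ℂ) *ᵥ u') = Complex.I • (z0 • u') := by
        rw [← h1, ← h2, ← hwu, hw]
      exact smul_right_injective _ Complex.I_ne_zero h3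
    obtain ⟨i0, hi0⟩ := Function.ne_iff.mp hune
    have him0 : z0.im = 0 := by
      have hL : ((A.map (algebraMap ℝ ℂ) *ᵥ u') i0).im = 0 := by
        show ((∑ j, (A.map (algebraMap ℝ ℂ)) i0 j * u' j)).im = 0
        rw [Complex.im_sum]
        refine Finset.sum_eq_zero fun j _ => ?_
        simp [Matrix.map_apply, hu', ← Complex.ofReal_mul]
      have hR : ((z0 • u') i0).im = z0.im * u i0 := by
        simp [hu', Pi.smul_apply, smul_eq_mul, Complex.mul_im]
      rw [hvequ] at hL
      rw [hR] at hL
      exact (mul_eq_zero.mp hL).resolve_right hi0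
    -- instability along u
    refine ⟨u, ?_⟩
    have heq : ∀ t : ℝ, mexp (t • A) *ᵥ u = Real.exp (t * z0.re) • u := by
      intro t
      funext i
      have h := key u' z0 hvequ t i
      simp only [hu', Complex.ofReal_re, Complex.ofReal_im, him0, mul_zero,
        Real.cos_zero, Real.sin_zero, one_mul, zero_mul, sub_zero] at h
      simpa using h
    have hnorm : ∀ t : ℝ, ‖mexp (t • A) *ᵥ u‖ = Real.exp (t * z0.re) * ‖u‖ := by
      intro t
      rw [heq t, norm_smul, Real.norm_eq_abs, abs_of_pos (Real.exp_pos _)]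
    have hun : 0 < ‖u‖ := norm_pos_iff.mpr hune
    have htend : Tendsto (fun t : ℝ => Real.exp (t * z0.re) * ‖u‖) atTop atTop :=
      (Real.tendsto_exp_atTop.comp (Filter.tendsto_id.atTop_mul_const hz0re)).atTop_mul_const hun
    exact htend.congr fun t => (hnorm t).symm
  · -- nondegenerate case
    push_neg at hdeg
    set F : ℝ → (Fin n → ℝ) := fun θ =>
      Real.cos θ • (fun i => (v i).re) - Real.sin θ • (fun i => (v i).im) with hF
    have hF0 : ∀ θ, F θ ≠ 0 := by
      intro θ h0
      obtain ⟨i, hi⟩ := hdeg θ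
      apply hi
      have := congrFun h0 i
      simpa [hF, Pi.sub_apply, Pi.smul_apply, smul_eq_mul] using this
    have hFcont : Continuous F :=
      ((Real.continuous_cos.smul continuous_const).sub
        (Real.continuous_sin.smul continuous_const))
    set g : ℝ → ℝ := fun θ => ‖F θ‖ with hg
    have hgcont : Continuous g := hFcont.norm
    have hgpos : ∀ θ, 0 < g θ := fun θ => norm_pos_iff.mpr (hF0 θ)
    have hper : Function.Periodic g (2 * Real.pi) := by
      intro θ
      simp [hg, hF, Real.cos_add_two_pi, Real.sin_add_two_pi]
    obtain ⟨θm, hθmmem, hmin⟩ :=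
      (isCompact_Icc (a := (0:ℝ)) (b := 2 * Real.pi)).exists_isMinOn
        ⟨0, le_refl 0, by positivity⟩ hgcont.continuousOn
    have hδ : 0 < g θm := hgpos θm
    have hlow : ∀ θ, g θm ≤ g θ := by
      intro θ
      obtain ⟨θ', hθ'mem, hEq⟩ := hper.exists_mem_Ico₀ (by positivity) θ
      rw [hEq]
      exact isMinOn_iff.mp hmin θ' (Set.Ico_subset_Icc_self hθ'mem)
    refine ⟨fun j => (v j).re, ?_⟩
    have heq : ∀ t : ℝ, mexp (t • A) *ᵥ (fun j => (v j).re)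
        = Real.exp (t * z0.re) • F (t * z0.im) := by
      intro t
      funext i
      rw [key v z0 hv t i]
      simp [hF, Pi.smul_apply, Pi.sub_apply, smul_eq_mul]
    have hbound : ∀ t : ℝ, Real.exp (t * z0.re) * g θm ≤ ‖mexp (t • A) *ᵥ (fun j => (v j).re)‖ := by
      intro t
      rw [heq t, norm_smul, Real.norm_eq_abs, abs_of_pos (Real.exp_pos _)]
      exact mul_le_mul_of_nonneg_left (hlow (t * z0.im)) (Real.exp_pos _).le
    have htend : Tendsto (fun t : ℝ => Real.exp (t * z0.re) * g θm) atTop atTop :=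
      (Real.tendsto_exp_atTop.comp (Filter.tendsto_id.atTop_mul_const hz0re)).atTop_mul_const hδ
    exact tendsto_atTop_mono hbound htend
end

section
/- The linear system dm/dt = A·m is asymptotically stable if and only if every SCC of the dependence graph of A is sub-critical; that is, exp(tA) converges to the zero matrix as t → ∞ if and only if for every SCC S, every eigenvalue of the block A_S has negative real part. Moreover, in that case A is invertible, so the only fixed point A·m = 0 is m = 0. -/
open Matrix Filter Topology Polynomial

attribute [local instance] Classical.propDecidable

namespace SCCAux

variable {n : ℕ} (A : Matrix (Fin n) (Fin n) ℝ)

lemma mutual_refl (i : Fin n) : Mutual A i i := ⟨.refl, .refl⟩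

lemma mutual_symm {i j : Fin n} (h : Mutual A i j) : Mutual A j i := ⟨h.2, h.1⟩

lemma mutual_trans {i j k : Fin n} (h : Mutual A i j) (h' : Mutual A j k) : Mutual A i k :=
  ⟨h.1.trans h'.1, h'.2.trans h.2⟩

/-- the set of vertices reachable from `i`, as a Finset -/
noncomputable def reachSet (i : Fin n) : Finset (Fin n) :=
  Finset.univ.filter (fun j => Reaches A i j)

lemma reachSet_mono {i j : Fin n} (h : Reaches A i j) : reachSet A j ⊆ reachSet A i := by
  intro k hk
  simp only [reachSet, Finset.mem_filter, Finset.mem_univ, true_and] at hk ⊢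
  exact h.trans hk

/-- the rank of a vertex -/
noncomputable def rk (i : Fin n) : ℕ := (reachSet A i).card

lemma rk_mono {i j : Fin n} (h : Reaches A i j) : rk A j ≤ rk A i :=
  Finset.card_le_card (reachSet_mono A h)

lemma mutual_of_rk_eq {i j : Fin n} (h : Reaches A i j) (hrk : rk A i = rk A j) :
    Mutual A i j := by
  refine ⟨h, ?_⟩
  have hsub := reachSet_mono A h
  have := Finset.eq_of_subset_of_card_le hsub (le_of_eq hrk)
  have hi : i ∈ reachSet A i := by
    simp only [reachSet, Finset.mem_filter, Finset.mem_univ, true_and]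
    exact Relation.ReflTransGen.refl
  rw [← this] at hi
  simp only [reachSet, Finset.mem_filter, Finset.mem_univ, true_and] at hi
  exact hi

/-- the class of `i`-mutual vertices as a Finset -/
noncomputable def mclass (i : Fin n) : Finset (Fin n) :=
  Finset.univ.filter (fun j => Mutual A i j)

lemma mclass_nonempty (i : Fin n) : (mclass A i).Nonempty :=
  ⟨i, by simp [mclass, mutual_refl]⟩

/-- minimal representative of the SCC of `i` -/
noncomputable def mn (i : Fin n) : Fin n := (mclass A i).min' (mclass_nonempty A i)

lemma mutual_mn (i : Fin n) : Mutual A i (mn A i) := by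
  have := (mclass A i).min'_mem (mclass_nonempty A i)
  simp only [mclass, Finset.mem_filter, Finset.mem_univ, true_and] at this
  exact this

lemma mclass_eq_of_mutual {i j : Fin n} (h : Mutual A i j) : mclass A i = mclass A j := by
  ext k
  simp only [mclass, Finset.mem_filter, Finset.mem_univ, true_and]
  exact ⟨fun h' => mutual_trans A (mutual_symm A h) h', fun h' => mutual_trans A h h'⟩

lemma rk_eq_of_mutual {i j : Fin n} (h : Mutual A i j) : rk A i = rk A j :=
  le_antisymm (rk_mono A h.2) (rk_mono A h.1)

/-- ordering function for block triangularization -/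
noncomputable def bfun (i : Fin n) : ℕ ×ₗ ℕ := toLex (rk A i, (mn A i : ℕ))

lemma bfun_eq_iff {i j : Fin n} : bfun A i = bfun A j ↔ Mutual A i j := by
  constructor
  · intro h
    have h1 : rk A i = rk A j := congrArg (fun p => (ofLex p).1) h
    have h2 : (mn A i : ℕ) = (mn A j : ℕ) := congrArg (fun p => (ofLex p).2) h
    have h3 : mn A i = mn A j := Fin.ext h2
    have := mutual_mn A i
    rw [h3] at this
    exact mutual_trans A this (mutual_symm A (mutual_mn A j))
  · intro h
    have h1 : rk A i = rk A j := rk_eq_of_mutual A h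
    have h2 : mclass A i = mclass A j := mclass_eq_of_mutual A h
    have h3 : mn A i = mn A j := by unfold mn; congr 1
    unfold bfun
    rw [h1, h3]

lemma blockTriangular : A.BlockTriangular (bfun A) := by
  intro i j hlt
  by_contra hne
  have hij : i ≠ j := by
    rintro rfl
    exact absurd rfl (ne_of_lt hlt)
  have hedge : Edge A j i := ⟨(Ne.symm hij), hne⟩
  have hreach : Reaches A j i := Relation.ReflTransGen.single hedge
  have hrk : rk A i ≤ rk A j := rk_mono A hreach
  rcases lt_or_eq_of_le hrk with hlt' | heq
  · -- then bfun i < bfun j, contradicting hlt : bfun j < bfun i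
    have : bfun A i < bfun A j := Prod.Lex.lt_iff.mpr (Or.inl hlt')
    exact absurd hlt (not_lt_of_gt this)
  · have : Mutual A j i := mutual_of_rk_eq A hreach heq.symm
    have heqb : bfun A j = bfun A i := (bfun_eq_iff A).mpr this
    exact absurd heqb (ne_of_lt hlt)

lemma charpoly_eq_prod :
    A.charpoly = ∏ a ∈ Finset.image (bfun A) Finset.univ,
      (A.toSquareBlock (bfun A) a).charpoly :=
  (blockTriangular A).charpoly

lemma block_charpoly (i₀ : Fin n) :
    (block A {j | Mutual A i₀ j}).charpoly
      = (A.toSquareBlock (bfun A) (bfun A i₀)).charpoly := by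
  have h : ∀ j, bfun A j = bfun A i₀ ↔ j ∈ {j | Mutual A i₀ j} := by
    intro j
    rw [Set.mem_setOf_eq, bfun_eq_iff]
    exact ⟨fun h => mutual_symm A h, fun h => mutual_symm A h⟩
  let e : {j // bfun A j = bfun A i₀} ≃ {j // j ∈ {j | Mutual A i₀ j}} :=
    Equiv.subtypeEquivRight h
  have he : (Matrix.reindex e e) (A.toSquareBlock (bfun A) (bfun A i₀))
      = block A {j | Mutual A i₀ j} := by
    ext x y
    obtain ⟨x, hx⟩ := x
    obtain ⟨y, hy⟩ := y
    rfl
  rw [← he, Matrix.charpoly_reindex]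

lemma root_iff (z : ℂ) :
    ((A.charpoly).map (algebraMap ℝ ℂ)).IsRoot z
      ↔ ∃ S, IsSCC A S ∧ IsEigenvalue (block A S) z := by
  rw [charpoly_eq_prod A, Polynomial.map_prod, Polynomial.IsRoot, Polynomial.eval_prod,
    Finset.prod_eq_zero_iff]
  constructor
  · rintro ⟨a, ha, hz⟩
    rw [Finset.mem_image] at ha
    obtain ⟨i₀, -, rfl⟩ := ha
    refine ⟨{j | Mutual A i₀ j}, ⟨i₀, rfl⟩, ?_⟩
    rw [IsEigenvalue, block_charpoly A i₀]
    exact hz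
  · rintro ⟨S, ⟨i₀, rfl⟩, hz⟩
    refine ⟨bfun A i₀, Finset.mem_image_of_mem _ (Finset.mem_univ _), ?_⟩
    rw [IsEigenvalue, block_charpoly A i₀] at hz
    exact hz

lemma subcritical_iff_hurwitz :
    (∀ S, IsSCC A S → SubCritical A S)
      ↔ ∀ z : ℂ, ((A.charpoly).map (algebraMap ℝ ℂ)).IsRoot z → z.re < 0 := by
  constructor
  · intro h z hz
    obtain ⟨S, hS, hzS⟩ := (root_iff A z).mp hz
    exact h S hS z hzS
  · intro h S hS z hz
    exact h z ((root_iff A z).mpr ⟨S, hS, hz⟩)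

end SCCAux

namespace ExpAux

open NormedSpace

variable {n : ℕ}

/-- `M ↦ M *ᵥ v` as a linear map. -/
noncomputable def mulVecLM (v : Fin n → ℂ) : Matrix (Fin n) (Fin n) ℂ →ₗ[ℂ] (Fin n → ℂ) where
  toFun M := M *ᵥ v
  map_add' M N := Matrix.add_mulVec M N v
  map_smul' c M := Matrix.smul_mulVec c M v

lemma exp_one_smul (c : ℂ) :
    exp (c • (1 : Matrix (Fin n) (Fin n) ℂ)) = Complex.exp c • (1 : Matrix (Fin n) (Fin n) ℂ) := by
  letI : NormedRing (Matrix (Fin n) (Fin n) ℂ) := Matrix.linftyOpNormedRing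
  letI : NormedAlgebra ℂ (Matrix (Fin n) (Fin n) ℂ) := Matrix.linftyOpNormedAlgebra
  have h := map_exp (algebraMap ℂ (Matrix (Fin n) (Fin n) ℂ)) (continuous_algebraMap _ _) c
  rw [Complex.exp_eq_exp_ℂ]
  calc exp (c • (1 : Matrix (Fin n) (Fin n) ℂ))
      = exp (algebraMap ℂ (Matrix (Fin n) (Fin n) ℂ) c) := by
        rw [Algebra.algebraMap_eq_smul_one]
    _ = algebraMap ℂ (Matrix (Fin n) (Fin n) ℂ) (exp c) := h.symm
    _ = exp c • (1 : Matrix (Fin n) (Fin n) ℂ) := Algebra.algebraMap_eq_smul_one _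

lemma real_smul_eq (t : ℝ) (B : Matrix (Fin n) (Fin n) ℂ) : t • B = (t : ℂ) • B := by
  ext i j
  simp [Matrix.smul_apply, Complex.real_smul]

lemma exp_smul_mulVec (B : Matrix (Fin n) (Fin n) ℂ) (μ : ℂ) (v : Fin n → ℂ) (k₀ : ℕ)
    (hv : ((B - μ • 1) ^ k₀) *ᵥ v = 0) (t : ℝ) :
    exp (t • B) *ᵥ v
      = ∑ k ∈ Finset.range k₀,
          (Complex.exp ((t : ℂ) * μ) * (t : ℂ) ^ k * ((k.factorial : ℂ))⁻¹)
            • (((B - μ • 1) ^ k) *ᵥ v) := by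
  letI : NormedRing (Matrix (Fin n) (Fin n) ℂ) := Matrix.linftyOpNormedRing
  letI : NormedAlgebra ℂ (Matrix (Fin n) (Fin n) ℂ) := Matrix.linftyOpNormedAlgebra
  set N : Matrix (Fin n) (Fin n) ℂ := B - μ • 1 with hN
  have hsplit : (t : ℂ) • B = ((t : ℂ) * μ) • (1 : Matrix (Fin n) (Fin n) ℂ) + (t : ℂ) • N := by
    rw [hN, smul_sub, smul_smul, add_sub_cancel]
  have hcomm : Commute (((t : ℂ) * μ) • (1 : Matrix (Fin n) (Fin n) ℂ)) ((t : ℂ) • N) :=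
    ((Commute.one_left N).smul_left _).smul_right _
  have hL : Continuous (mulVecLM (n := n) v) := LinearMap.continuous_of_finiteDimensional _
  let L : Matrix (Fin n) (Fin n) ℂ →L[ℂ] (Fin n → ℂ) := ⟨mulVecLM v, hL⟩
  have hsum : Summable (fun k : ℕ => ((k.factorial : ℂ))⁻¹ • ((t : ℂ) • N) ^ k) :=
    expSeries_summable' (𝕂 := ℂ) ((t : ℂ) • N)
  have hATv : exp ((t : ℂ) • N) *ᵥ v
      = ∑' k : ℕ, ((k.factorial : ℂ))⁻¹ • (((t : ℂ) • N) ^ k *ᵥ v) := by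
    have hmap := L.map_tsum hsum
    rw [exp_eq_tsum ℂ]
    refine hmap.trans (tsum_congr fun k => ?_)
    simp [L, mulVecLM, Matrix.smul_mulVec]
  have hzero : ∀ k ∉ Finset.range k₀,
      ((k.factorial : ℂ))⁻¹ • (((t : ℂ) • N) ^ k *ᵥ v) = 0 := by
    intro k hk
    rw [Finset.mem_range, not_lt] at hk
    have hNk : N ^ k *ᵥ v = 0 := by
      have hdecomp : N ^ k = N ^ (k - k₀) * N ^ k₀ := by
        rw [← pow_add]
        congr 1
        omega
      rw [hdecomp, ← Matrix.mulVec_mulVec, hv, Matrix.mulVec_zero]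
    rw [_root_.smul_pow, Matrix.smul_mulVec, hNk, smul_zero, smul_zero]
  calc exp (t • B) *ᵥ v
      = (exp (((t : ℂ) * μ) • (1 : Matrix (Fin n) (Fin n) ℂ)) * exp ((t : ℂ) • N)) *ᵥ v := by
        rw [real_smul_eq, hsplit, Matrix.exp_add_of_commute _ _ hcomm]
    _ = Complex.exp ((t : ℂ) * μ) • (exp ((t : ℂ) • N) *ᵥ v) := by
        rw [exp_one_smul, smul_mul_assoc, one_mul, Matrix.smul_mulVec]
    _ = Complex.exp ((t : ℂ) * μ) •
          ∑ k ∈ Finset.range k₀, ((k.factorial : ℂ))⁻¹ • (((t : ℂ) • N) ^ k *ᵥ v) := by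
        rw [hATv, tsum_eq_sum hzero]
    _ = ∑ k ∈ Finset.range k₀,
          (Complex.exp ((t : ℂ) * μ) * (t : ℂ) ^ k * ((k.factorial : ℂ))⁻¹) • (N ^ k *ᵥ v) := by
        rw [Finset.smul_sum]
        refine Finset.sum_congr rfl fun k _ => ?_
        rw [_root_.smul_pow, Matrix.smul_mulVec, smul_smul, smul_smul]
        ring_nf

end ExpAux

namespace ExpAux

open NormedSpace Module

variable {n : ℕ}

lemma eval_charpoly (B : Matrix (Fin n) (Fin n) ℂ) (z : ℂ) :
    B.charpoly.eval z = (algebraMap ℂ (Matrix (Fin n) (Fin n) ℂ) z - B).det := by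
  rw [Matrix.charpoly, _root_.eval_det, Matrix.matPolyEquiv_charmatrix]
  congr 1
  rw [Polynomial.eval_sub, Polynomial.eval_X, Polynomial.eval_C]
  congr 1

lemma mem_spectrum_iff_root (B : Matrix (Fin n) (Fin n) ℂ) (z : ℂ) :
    z ∈ spectrum ℂ B ↔ B.charpoly.IsRoot z := by
  rw [spectrum.mem_iff, Polynomial.IsRoot, eval_charpoly,
    Matrix.isUnit_iff_isUnit_det, isUnit_iff_ne_zero, not_ne_iff]

lemma tendsto_coeff {μ : ℂ} (hμ : μ.re < 0) (k : ℕ) :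
    Filter.Tendsto (fun t : ℝ => Complex.exp ((t : ℂ) * μ) * (t : ℂ) ^ k * ((k.factorial : ℂ))⁻¹)
      Filter.atTop (nhds 0) := by
  rw [tendsto_zero_iff_norm_tendsto_zero]
  set a : ℝ := -μ.re with ha
  have ha0 : 0 < a := by simpa [ha] using hμ
  have hbase := Real.tendsto_pow_mul_exp_neg_atTop_nhds_zero k
  have hat : Filter.Tendsto (fun t : ℝ => a * t) Filter.atTop Filter.atTop :=
    Filter.Tendsto.const_mul_atTop ha0 Filter.tendsto_id
  have hcomp := (hbase.comp hat).const_mul ((a ^ k)⁻¹ * ((k.factorial : ℝ))⁻¹)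
  rw [mul_zero] at hcomp
  refine Filter.Tendsto.congr' ?_ hcomp
  filter_upwards [Filter.eventually_ge_atTop (0 : ℝ)] with t ht
  have h1 : ‖Complex.exp ((t : ℂ) * μ) * (t : ℂ) ^ k * ((k.factorial : ℂ))⁻¹‖
      = Real.exp (t * μ.re) * t ^ k * ((k.factorial : ℝ))⁻¹ := by
    rw [norm_mul, norm_mul, Complex.norm_exp]
    have : ((t : ℂ) * μ).re = t * μ.re := by simp [Complex.mul_re]
    rw [this]
    congr 1
    · congr 1
      rw [norm_pow]
      simp [abs_of_nonneg ht]
    · simp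
  rw [Function.comp_apply]
  rw [h1]
  have hexp : Real.exp (-(a * t)) = Real.exp (t * μ.re) := by
    congr 1
    rw [ha]
    ring
  rw [hexp, mul_pow]
  have hak : (a : ℝ) ^ k ≠ 0 := pow_ne_zero _ (ne_of_gt ha0)
  field_simp

end ExpAux

namespace ExpAux

open NormedSpace Module

variable {n : ℕ}

lemma tendsto_mulVec (B : Matrix (Fin n) (Fin n) ℂ)
    (hB : ∀ z : ℂ, B.charpoly.IsRoot z → z.re < 0) (v : Fin n → ℂ) :
    Filter.Tendsto (fun t : ℝ => exp (t • B) *ᵥ v) Filter.atTop (nhds 0) := by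
  set f : Module.End ℂ (Fin n → ℂ) := Matrix.toLinAlgEquiv' B with hf
  have htop := Module.End.iSup_maxGenEigenspace_eq_top f
  have hv : v ∈ ⨆ μ : ℂ, f.maxGenEigenspace μ := htop ▸ Submodule.mem_top
  refine Submodule.iSup_induction (motive := fun w =>
      Filter.Tendsto (fun t : ℝ => exp (t • B) *ᵥ w) Filter.atTop (nhds 0))
    (fun μ : ℂ => f.maxGenEigenspace μ) hv ?_ ?_ ?_
  · intro μ w hw'
    have hw : w ∈ f.maxGenEigenspace μ := hw'
    by_cases hw0 : w = 0
    · subst hw0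
      simpa [Matrix.mulVec_zero] using tendsto_const_nhds
    · -- μ is an eigenvalue of B
      have hμspec : μ ∈ spectrum ℂ B := by
        have hne : f.maxGenEigenspace μ ≠ ⊥ := by
          intro hbot
          rw [hbot, Submodule.mem_bot] at hw
          exact hw0 hw
        have hgen : f.HasGenEigenvalue μ (finrank ℂ (Fin n → ℂ)) := by
          rw [Module.End.hasGenEigenvalue_iff]
          rw [← Module.End.maxGenEigenspace_eq_genEigenspace_finrank]
          exact hne
        have heig : f.HasEigenvalue μ := Module.End.hasEigenvalue_of_hasGenEigenvalue hgen
        have := Module.End.hasEigenvalue_iff_mem_spectrum.mp heig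
        rwa [hf, AlgEquiv.spectrum_eq] at this
      have hμ : μ.re < 0 := hB μ ((mem_spectrum_iff_root B μ).mp hμspec)
      -- w is killed by (B - μ•1)^(finrank)
      set k₀ := finrank ℂ (Fin n → ℂ) with hk₀
      have hker : ((B - μ • 1) ^ k₀) *ᵥ w = 0 := by
        rw [Module.End.maxGenEigenspace_eq_genEigenspace_finrank,
          Module.End.mem_genEigenspace_nat, LinearMap.mem_ker] at hw
        have hfeq : (f - μ • 1) ^ k₀ = Matrix.toLinAlgEquiv' ((B - μ • 1) ^ k₀) := by
          rw [map_pow, map_sub, hf]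
          congr 2
          rw [_root_.map_smul, _root_.map_one]
        rw [hfeq] at hw
        rwa [Matrix.toLinAlgEquiv'_apply] at hw
      have hcalc := exp_smul_mulVec B μ w k₀ hker
      rw [funext hcalc]
      have : (0 : Fin n → ℂ) = ∑ k ∈ Finset.range k₀, (0 : Fin n → ℂ) := by simp
      rw [this]
      refine tendsto_finset_sum _ fun k _ => ?_
      have := (tendsto_coeff hμ k).smul_const (((B - μ • 1) ^ k) *ᵥ w)
      simpa using this
  · simpa [Matrix.mulVec_zero] using tendsto_const_nhds
  · intro x y hx hy
    have := hx.add hy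
    rw [add_zero] at this
    refine this.congr fun t => ?_
    rw [Matrix.mulVec_add]

lemma tendsto_exp_matrix (B : Matrix (Fin n) (Fin n) ℂ)
    (hB : ∀ z : ℂ, B.charpoly.IsRoot z → z.re < 0) :
    Filter.Tendsto (fun t : ℝ => exp (t • B)) Filter.atTop (nhds 0) := by
  apply tendsto_pi_nhds.mpr
  intro i
  apply tendsto_pi_nhds.mpr
  intro j
  have h := tendsto_mulVec B hB (Pi.single j 1)
  have h2 := (tendsto_pi_nhds.mp h) i
  simp only [Pi.zero_apply] at h2 ⊢
  refine h2.congr fun t => ?_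
  rw [Matrix.mulVec_single]
  exact mul_one _

lemma not_tendsto (B : Matrix (Fin n) (Fin n) ℂ) (z : ℂ) (hz : B.charpoly.IsRoot z)
    (hre : 0 ≤ z.re)
    (h : Filter.Tendsto (fun t : ℝ => exp (t • B)) Filter.atTop (nhds 0)) : False := by
  have hspec : z ∈ spectrum ℂ B := (mem_spectrum_iff_root B z).mpr hz
  have heig : Module.End.HasEigenvalue (Matrix.toLinAlgEquiv' B) z := by
    rw [Module.End.hasEigenvalue_iff_mem_spectrum, AlgEquiv.spectrum_eq]
    exact hspec
  obtain ⟨v, hv⟩ := heig.exists_hasEigenvector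
  have hv1 : ((B - z • 1) ^ 1) *ᵥ v = 0 := by
    rw [pow_one, Matrix.sub_mulVec]
    have happ := Module.End.HasEigenvector.apply_eq_smul hv
    rw [Matrix.toLinAlgEquiv'_apply] at happ
    rw [happ]
    have : (z • (1 : Matrix (Fin n) (Fin n) ℂ)) *ᵥ v = z • v := by
      rw [Matrix.smul_mulVec, Matrix.one_mulVec]
    rw [this, sub_self]
  have hcalc := exp_smul_mulVec B z v 1 hv1
  obtain ⟨i, hi⟩ : ∃ i, v i ≠ 0 := Function.ne_iff.mp hv.2
  -- component tendsto zero
  have hcomp : Filter.Tendsto (fun t : ℝ => (exp (t • B) *ᵥ v) i) Filter.atTop (nhds 0) := by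
    have : ∀ t : ℝ, (exp (t • B) *ᵥ v) i = ∑ j, exp (t • B) i j * v j := fun t => rfl
    rw [funext this]
    have hzero : (0 : ℂ) = ∑ j : Fin n, 0 * v j := by simp
    rw [hzero]
    refine tendsto_finset_sum _ fun j _ => ?_
    have hij : Filter.Tendsto (fun t : ℝ => exp (t • B) i j) Filter.atTop (nhds 0) :=
      tendsto_pi_nhds.mp (tendsto_pi_nhds.mp h i) j
    exact hij.mul_const (v j)
  have hval : ∀ t : ℝ, (exp (t • B) *ᵥ v) i = Complex.exp ((t : ℂ) * z) * v i := by
    intro t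
    rw [hcalc t]
    simp [Matrix.one_mulVec]
  rw [funext hval] at hcomp
  have hnorm := hcomp.norm
  rw [norm_zero] at hnorm
  have hpos : 0 < ‖v i‖ := norm_pos_iff.mpr hi
  have hlow : ∀ᶠ t : ℝ in Filter.atTop, ‖Complex.exp ((t : ℂ) * z) * v i‖ < ‖v i‖ :=
    hnorm.eventually (eventually_lt_nhds hpos)
  have hge : ∀ t : ℝ, 0 ≤ t → ‖v i‖ ≤ ‖Complex.exp ((t : ℂ) * z) * v i‖ := by
    intro t ht
    rw [norm_mul]
    have habs : ‖Complex.exp ((t : ℂ) * z)‖ = Real.exp (t * z.re) := by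
      rw [Complex.norm_exp]
      congr 1
      simp [Complex.mul_re]
    have h1 : (1 : ℝ) ≤ Real.exp (t * z.re) := by
      rw [Real.one_le_exp_iff]
      exact mul_nonneg ht hre
    rw [habs]
    nlinarith [norm_nonneg (v i)]
  obtain ⟨t, ht1, ht2⟩ := (hlow.and (Filter.eventually_ge_atTop (0 : ℝ))).exists
  exact absurd (hge t ht2) (not_le.mpr ht1)

end ExpAux

namespace ExpAux

open NormedSpace

variable {n : ℕ}

lemma map_mexp (M : Matrix (Fin n) (Fin n) ℝ) :
    (mexp M).map (algebraMap ℝ ℂ) = exp (M.map (algebraMap ℝ ℂ)) := by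
  letI : NormedRing (Matrix (Fin n) (Fin n) ℝ) := Matrix.linftyOpNormedRing
  letI : NormedAlgebra ℝ (Matrix (Fin n) (Fin n) ℝ) := Matrix.linftyOpNormedAlgebra
  letI : NormedRing (Matrix (Fin n) (Fin n) ℂ) := Matrix.linftyOpNormedRing
  letI : NormedAlgebra ℝ (Matrix (Fin n) (Fin n) ℂ) := Matrix.linftyOpNormedAlgebra
  letI : NormedAlgebra ℚ (Matrix (Fin n) (Fin n) ℝ) := Matrix.linftyOpNormedAlgebra
  have h1 : mexp M = exp M := by
    rw [exp_eq_tsum ℝ]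
    rfl
  have hcont : Continuous (((algebraMap ℝ ℂ).mapMatrix :
      Matrix (Fin n) (Fin n) ℝ →+* Matrix (Fin n) (Fin n) ℂ) : _ → _) := by
    apply continuous_pi; intro i; apply continuous_pi; intro j
    exact Complex.continuous_ofReal.comp ((continuous_apply j).comp (continuous_apply i))
  have h2 := map_exp ((algebraMap ℝ ℂ).mapMatrix :
      Matrix (Fin n) (Fin n) ℝ →+* Matrix (Fin n) (Fin n) ℂ) hcont M
  calc (mexp M).map (algebraMap ℝ ℂ)
      = (algebraMap ℝ ℂ).mapMatrix (exp M) := by rw [h1]; rfl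
    _ = exp ((algebraMap ℝ ℂ).mapMatrix M) := h2
    _ = exp (M.map (algebraMap ℝ ℂ)) := by
        rfl

lemma map_smul_matrix (A : Matrix (Fin n) (Fin n) ℝ) (t : ℝ) :
    (t • A).map (algebraMap ℝ ℂ) = t • (A.map (algebraMap ℝ ℂ)) := by
  ext i j
  simp [Matrix.smul_apply, Matrix.map_apply, Complex.real_smul]

end ExpAux

/-- `exp(tA) → 0` as `t → ∞` iff every SCC of `G(A)` is sub-critical;
moreover in that case `A` is invertible, so the only fixed point is `0`. -/
theorem asymptotically_stable_iff_all_subCritical (n : ℕ) (hn : 1 ≤ n)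
    (A : Matrix (Fin n) (Fin n) ℝ) (hA : Metzler A) :
    (Filter.Tendsto (fun t : ℝ => mexp (t • A)) Filter.atTop (nhds 0) ↔
      ∀ S : Set (Fin n), IsSCC A S → SubCritical A S) ∧
    ((∀ S : Set (Fin n), IsSCC A S → SubCritical A S) →
      IsUnit A ∧ ∀ m : Fin n → ℝ, A *ᵥ m = 0 → m = 0) := by
  set B : Matrix (Fin n) (Fin n) ℂ := A.map (algebraMap ℝ ℂ) with hB
  have hcp : B.charpoly = (A.charpoly).map (algebraMap ℝ ℂ) := Matrix.charpoly_map A _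
  have hiff := SCCAux.subcritical_iff_hurwitz A
  have hmaps : ∀ t : ℝ, (mexp (t • A)).map (algebraMap ℝ ℂ) = NormedSpace.exp (t • B) := by
    intro t
    rw [ExpAux.map_mexp, ExpAux.map_smul_matrix]
  have hentry : ∀ t : ℝ, ∀ i j, NormedSpace.exp (t • B) i j = ((mexp (t • A)) i j : ℂ) := by
    intro t i j
    rw [← hmaps t]
    rfl
  refine ⟨⟨?_, ?_⟩, ?_⟩
  · -- tendsto → subcritical
    intro htend
    rw [hiff]
    intro z hz
    by_contra hlt
    refine ExpAux.not_tendsto B z ?_ (not_lt.mp hlt) ?_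
    · rw [hcp]
      exact hz
    · apply tendsto_pi_nhds.mpr
      intro i
      apply tendsto_pi_nhds.mpr
      intro j
      have h0 : Filter.Tendsto (fun t : ℝ => mexp (t • A) i j) Filter.atTop (nhds 0) :=
        tendsto_pi_nhds.mp (tendsto_pi_nhds.mp htend i) j
      show Filter.Tendsto (fun t : ℝ => NormedSpace.exp (t • B) i j) Filter.atTop (nhds 0)
      have hcomp := (Complex.continuous_ofReal.tendsto 0).comp h0
      rw [Complex.ofReal_zero] at hcomp
      refine hcomp.congr fun t => ?_
      rw [Function.comp_apply, hentry t i j]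
  · -- subcritical → tendsto
    intro hsub
    have hz : ∀ z : ℂ, B.charpoly.IsRoot z → z.re < 0 := by
      rw [hcp]
      exact hiff.mp hsub
    have hc := ExpAux.tendsto_exp_matrix B hz
    apply tendsto_pi_nhds.mpr
    intro i
    apply tendsto_pi_nhds.mpr
    intro j
    have h0 : Filter.Tendsto (fun t : ℝ => NormedSpace.exp (t • B) i j) Filter.atTop (nhds 0) :=
      tendsto_pi_nhds.mp (tendsto_pi_nhds.mp hc i) j
    show Filter.Tendsto (fun t : ℝ => mexp (t • A) i j) Filter.atTop (nhds 0)
    have hcomp := (Complex.continuous_re.tendsto 0).comp h0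
    rw [Complex.zero_re] at hcomp
    refine hcomp.congr fun t => ?_
    rw [Function.comp_apply, hentry t i j, Complex.ofReal_re]
  · -- invertibility
    intro hsub
    have hz := hiff.mp hsub
    have hdet : A.det ≠ 0 := by
      intro h0
      have hcoeff : A.charpoly.eval 0 = 0 := by
        rw [← Polynomial.coeff_zero_eq_eval_zero]
        have hds := Matrix.det_eq_sign_charpoly_coeff A
        rw [h0] at hds
        rcases mul_eq_zero.mp hds.symm with h | h
        · exact absurd h (by positivity)
        · exact h
      have hroot : ((A.charpoly).map (algebraMap ℝ ℂ)).IsRoot 0 := by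
        rw [Polynomial.IsRoot, Polynomial.eval_zero_map, hcoeff, map_zero]
      have := hz 0 hroot
      simp at this
    have hunit : IsUnit A.det := isUnit_iff_ne_zero.mpr hdet
    refine ⟨(Matrix.isUnit_iff_isUnit_det A).mpr hunit, ?_⟩
    intro m hm
    have hminv : A⁻¹ *ᵥ (A *ᵥ m) = m := by
      rw [Matrix.mulVec_mulVec, Matrix.nonsing_inv_mul A hunit, Matrix.one_mulVec]
    rw [hm, Matrix.mulVec_zero] at hminv
    exact hminv.symm
end

section
/- Suppose no SCC of the dependence graph of A is super-critical. If m and m' are two nonnegative fixed points of A that agree on every vertex belonging to a critical SCC, then m = m'. In other words, the components of a nonnegative fixed point on the sub-critical SCCs are uniquely determined by its components on the critical SCCs. -/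
open Matrix Filter Topology Polynomial

attribute [local instance] Classical.propDecidable

/-!
The difference `d = m - m'` satisfies `A d = 0` and vanishes on the critical SCCs. Process the
remaining SCCs in topological order of the condensation: when `S` is reached, `d` already
vanishes on every vertex with an edge into `S`, so `A_S d|_S = 0`. Since `S` is neither
critical nor super-critical, `0` is not an eigenvalue of `A_S`, i.e. `det A_S ≠ 0`, and
hence `d|_S = 0`.
-/

theorem Relation.wellFounded_strictReflTransGen {α : Type*} [Finite α] (r : α → α → Prop) :
    WellFounded fun a b => ReflTransGen r a b ∧ ¬ ReflTransGen r b a :=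
  haveI : IsTrans α fun a b => ReflTransGen r a b ∧ ¬ ReflTransGen r b a :=
    ⟨fun _ _ _ hab hbc => ⟨hab.1.trans hbc.1, fun hca => hbc.2 (hca.trans hab.1)⟩⟩
  haveI : Std.Irrefl fun a b => ReflTransGen r a b ∧ ¬ ReflTransGen r b a :=
    ⟨fun _ h => h.2 h.1⟩
  Finite.wellFounded_of_trans_of_irrefl _

theorem isEigenvalue_zero_of_det_eq_zero {ι : Type*} [Fintype ι] [DecidableEq ι]
    {M : Matrix ι ι ℝ} (hM : M.det = 0) : IsEigenvalue M 0 := by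
  have hcoeff : M.charpoly.coeff 0 = 0 := by
    simpa [M.det_eq_sign_charpoly_coeff] using hM
  rw [IsEigenvalue, IsRoot, eval_map, eval₂_at_zero, hcoeff, map_zero]

section Blocks

variable {n : ℕ} {A : Matrix (Fin n) (Fin n) ℝ} {S : Set (Fin n)}

theorem critical_of_det_block_eq_zero (hS : ¬ SuperCritical A S) (hdet : (block A S).det = 0) :
    Critical A S :=
  ⟨isEigenvalue_zero_of_det_eq_zero hdet, fun z hz => not_lt.1 fun hpos => hS ⟨z, hz, hpos⟩⟩

theorem block_mulVec_restrict_eq_zero {d : Fin n → ℝ} (hd : A *ᵥ d = 0)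
    (hin : ∀ i ∈ S, ∀ j ∉ S, A i j ≠ 0 → d j = 0) :
    block A S *ᵥ (fun i : S => d i) = 0 := by
  funext i
  have houter : ∑ j : {j // j ∉ S}, A i j * d j = 0 :=
    Finset.sum_eq_zero fun j _ => by
      by_cases hij : A i j = 0
      · rw [hij, zero_mul]
      · rw [hin i i.2 j j.2 hij, mul_zero]
  have hrow := congrFun hd i
  rw [mulVec, dotProduct, ← Fintype.sum_subtype_add_sum_subtype (· ∈ S), houter,
    add_zero] at hrow
  exact hrow

theorem eq_zero_on_of_not_critical (hsup : ¬ SuperCritical A S) (hcrit : ¬ Critical A S)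
    {d : Fin n → ℝ} (hd : A *ᵥ d = 0) (hin : ∀ i ∈ S, ∀ j ∉ S, A i j ≠ 0 → d j = 0) :
    ∀ i ∈ S, d i = 0 := by
  have hdet : (block A S).det ≠ 0 := fun h => hcrit (critical_of_det_block_eq_zero hsup h)
  have hrestrict := eq_zero_of_mulVec_eq_zero hdet (block_mulVec_restrict_eq_zero hd hin)
  exact fun i hi => congrFun hrestrict ⟨i, hi⟩

end Blocks

theorem fixedPoint_determined_on_critical_general (n : ℕ)
    (A : Matrix (Fin n) (Fin n) ℝ)
    (hsup : ∀ S : Set (Fin n), IsSCC A S → ¬ SuperCritical A S)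
    (m m' : Fin n → ℝ)
    (hm : NonnegFixedPoint A m) (hm' : NonnegFixedPoint A m')
    (hagree : ∀ i : Fin n,
      (∃ S : Set (Fin n), IsSCC A S ∧ Critical A S ∧ i ∈ S) → m i = m' i) :
    m = m' := by
  have hd : A *ᵥ (m - m') = 0 := by rw [mulVec_sub, hm.2, hm'.2, sub_zero]
  suffices ∀ i, (m - m') i = 0 from funext fun i => sub_eq_zero.1 (this i)
  intro i
  induction i using (Relation.wellFounded_strictReflTransGen (Edge A)).induction with
  | h i ih =>
    set S : Set (Fin n) := {j | Mutual A i j}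
    have hSCC : IsSCC A S := ⟨i, rfl⟩
    have hiS : i ∈ S := ⟨.refl, .refl⟩
    by_cases hcrit : Critical A S
    · exact sub_eq_zero.2 (hagree i ⟨S, hSCC, hcrit, hiS⟩)
    refine eq_zero_on_of_not_critical (hsup S hSCC) hcrit hd (fun k hk j hj hkj => ?_) i hiS
    have hji : Reaches A j i := .head ⟨fun h => hj (h ▸ hk), hkj⟩ hk.2
    exact ih j ⟨hji, fun hij => hj ⟨hij, hji⟩⟩

/-- if no SCC is super-critical, a nonnegative fixed point is uniquely
determined by its values on the vertices of the critical SCCs. -/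
theorem fixedPoint_determined_on_critical (n : ℕ) (hn : 1 ≤ n)
    (A : Matrix (Fin n) (Fin n) ℝ) (hA : Metzler A)
    (hsup : ∀ S : Set (Fin n), IsSCC A S → ¬ SuperCritical A S)
    (m m' : Fin n → ℝ)
    (hm : NonnegFixedPoint A m) (hm' : NonnegFixedPoint A m')
    (hagree : ∀ i : Fin n,
      (∃ S : Set (Fin n), IsSCC A S ∧ Critical A S ∧ i ∈ S) → m i = m' i) :
    m = m' :=
  fixedPoint_determined_on_critical_general n A hsup m m' hm hm' hagree
end

section
/- Let S be a sub-critical SCC of the dependence graph of A and let m be a nonnegative fixed point of A. If there exist a vertex i ∈ S and a vertex j ∉ S with A i j > 0 and m j > 0, then m i' > 0 for every vertex i' ∈ S. -/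
open Matrix Filter Topology Polynomial

attribute [local instance] Classical.propDecidable

/-!
At a vertex `b` the fixed-point equation `∑ₓ A b x * m x = 0` is a sum of nonnegative terms
once `m b = 0`, so a zero of `m` at `b` forces a zero at every `a` with an edge `a → b`.
Zeros therefore propagate backwards along paths. The vertex `j` feeds into `S` and `S` is
strongly connected, so `j` reaches every vertex of `S`; a zero there would contradict `m j > 0`.
-/

variable {n : ℕ} {A : Matrix (Fin n) (Fin n) ℝ}

lemma reaches_of_ne_zero {i j : Fin n} (h : A i j ≠ 0) : Reaches A j i := by
  by_cases hji : j = i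
  · subst hji
    exact Relation.ReflTransGen.refl
  · exact Relation.ReflTransGen.single ⟨hji, h⟩

namespace NonnegFixedPoint

variable {m : Fin n → ℝ}

lemma eq_zero_of_edge (hm : NonnegFixedPoint A m) (hA : Metzler A) {a b : Fin n}
    (hab : Edge A a b) (hb : m b = 0) : m a = 0 := by
  have hsum : ∑ x, A b x * m x = 0 := congrFun hm.2 b
  have hnonneg : ∀ x ∈ Finset.univ, 0 ≤ A b x * m x := by
    intro x _
    by_cases hx : x = b
    · simp [hx, hb]
    · exact mul_nonneg (hA b x (Ne.symm hx)) (hm.1 x)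
  have hterm := (Finset.sum_eq_zero_iff_of_nonneg hnonneg).mp hsum a (Finset.mem_univ a)
  exact (mul_eq_zero.mp hterm).resolve_left hab.2

lemma eq_zero_of_reaches (hm : NonnegFixedPoint A m) (hA : Metzler A) {a b : Fin n}
    (hab : Reaches A a b) (hb : m b = 0) : m a = 0 := by
  induction hab using Relation.ReflTransGen.head_induction_on with
  | refl => exact hb
  | head hedge _ ih => exact hm.eq_zero_of_edge hA hedge ih

end NonnegFixedPoint

theorem pos_on_subCritical_scc_general (n : ℕ)
    (A : Matrix (Fin n) (Fin n) ℝ) (hA : Metzler A)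
    (S : Set (Fin n)) (hS : IsSCC A S)
    (m : Fin n → ℝ) (hm : NonnegFixedPoint A m)
    (i : Fin n) (hi : i ∈ S) (j : Fin n)
    (hAij : 0 < A i j) (hmj : 0 < m j)
    (i' : Fin n) (hi' : i' ∈ S) : 0 < m i' := by
  obtain ⟨i₀, rfl⟩ := hS
  have hji' : Reaches A j i' := (reaches_of_ne_zero hAij.ne').trans (hi.2.trans hi'.1)
  exact (hm.1 i').lt_of_ne' fun h => hmj.ne' (hm.eq_zero_of_reaches hA hji' h)

/-- a sub-critical SCC receiving positive mass from outside carries strictly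
positive mass on all of its vertices. -/
theorem pos_on_subCritical_scc (n : ℕ) (hn : 1 ≤ n)
    (A : Matrix (Fin n) (Fin n) ℝ) (hA : Metzler A)
    (S : Set (Fin n)) (hS : IsSCC A S) (hsub : SubCritical A S)
    (m : Fin n → ℝ) (hm : NonnegFixedPoint A m)
    (i : Fin n) (hi : i ∈ S) (j : Fin n) (hj : j ∉ S)
    (hAij : 0 < A i j) (hmj : 0 < m j)
    (i' : Fin n) (hi' : i' ∈ S) : 0 < m i' :=
  pos_on_subCritical_scc_general n A hA S hS m hm i hi j hAij hmj i' hi'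
end

section
/- Suppose no SCC of the dependence graph of A is super-critical, and let S be a sub-critical SCC. Then S is trivial if and only if every SCC immediately upstream of S is trivial. -/
open Matrix Filter Topology Polynomial

attribute [local instance] Classical.propDecidable

/-- Auxiliary: zero propagates backwards across one edge. -/
lemma zero_step {n : ℕ} {A : Matrix (Fin n) (Fin n) ℝ} (hA : Metzler A)
    {m : Fin n → ℝ} (hm : NonnegFixedPoint A m) {b k : Fin n}
    (hkb : k ≠ b) (hAbk : A b k ≠ 0) (hb : m b = 0) : m k = 0 := by
  have hsum : ∑ c, A b c * m c = 0 := by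
    have := congrFun hm.2 b
    simpa [Matrix.mulVec, dotProduct] using this
  have hterm : ∀ c ∈ Finset.univ, 0 ≤ A b c * m c := by
    intro c _
    by_cases hc : c = b
    · subst hc; simp [hb]
    · exact mul_nonneg (hA b c (Ne.symm hc)) (hm.1 c)
  have h0 := (Finset.sum_eq_zero_iff_of_nonneg hterm).mp hsum k (Finset.mem_univ k)
  rcases mul_eq_zero.mp h0 with h | h
  · exact absurd h hAbk
  · exact h

/-- Auxiliary: zero propagates backwards along reachability. -/
lemma zero_reaches {n : ℕ} {A : Matrix (Fin n) (Fin n) ℝ} (hA : Metzler A)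
    {m : Fin n → ℝ} (hm : NonnegFixedPoint A m) {k j : Fin n}
    (h : Reaches A k j) (hj : m j = 0) : m k = 0 := by
  induction h using Relation.ReflTransGen.head_induction_on with
  | refl => exact hj
  | head h' _ ih => exact zero_step hA hm h'.1 h'.2 ih

/-- a sub-critical SCC is trivial iff every SCC immediately upstream of it
is trivial (assuming no super-critical SCC). -/
theorem subCritical_trivial_iff_upstream_trivial (n : ℕ) (hn : 1 ≤ n)
    (A : Matrix (Fin n) (Fin n) ℝ) (hA : Metzler A)
    (hsup : ∀ S : Set (Fin n), IsSCC A S → ¬ SuperCritical A S)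
    (S : Set (Fin n)) (hS : IsSCC A S) (hsub : SubCritical A S) :
    TrivialSCC A S ↔
      ∀ T : Set (Fin n), IsSCC A T → ImmediatelyUpstream A T S → TrivialSCC A T := by
  constructor
  · -- forward: S trivial ⇒ upstream trivial
    rintro hTriv T ⟨t, hT⟩ ⟨hTS, i, hiT, j, hjS, hij⟩ m hm k hkT
    -- m j = 0, then m i = 0 via the edge, then propagate inside T
    have hj : m j = 0 := hTriv m hm j hjS
    have hi : m i = 0 := zero_step hA hm hij.1 hij.2 hj
    -- k reaches i inside T
    have hki : Reaches A k i := by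
      have h1 : Mutual A t k := by rw [hT] at hkT; exact hkT
      have h2 : Mutual A t i := by rw [hT] at hiT; exact hiT
      exact h1.2.trans h2.1
    exact zero_reaches hA hm hki hi
  · -- backward: upstream trivial ⇒ S trivial
    intro hUp m hm i hiS
    -- the restriction of m to S is in the kernel of block A S
    set M := block A S with hM
    have hker : M *ᵥ (fun k : S => m k) = 0 := by
      funext p
      obtain ⟨q, hqS⟩ := p
      have hsum : ∑ c, A q c * m c = 0 := by
        have := congrFun hm.2 q
        simpa [Matrix.mulVec, dotProduct] using this
      -- off-S terms vanish
      have hoff : ∀ k, k ∉ S → A q k * m k = 0 := by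
        intro k hkS
        by_cases hAk : A q k = 0
        · simp [hAk]
        · have hkq : k ≠ q := fun h => hkS (h ▸ hqS)
          have hmk : m k = 0 := by
            refine hUp {j | Mutual A k j} ⟨k, rfl⟩ ⟨?_, k, ?_, q, hqS, hkq, hAk⟩ m hm k ?_
            · intro h
              exact hkS (h ▸ (show Mutual A k k from ⟨.refl, .refl⟩))
            · exact ⟨.refl, .refl⟩
            · exact ⟨.refl, .refl⟩
          simp [hmk]
      have hsplit : ∑ c ∈ Finset.univ.filter (· ∈ S), A q c * m c
          + ∑ c ∈ Finset.univ.filter (¬ · ∈ S), A q c * m c = ∑ c, A q c * m c :=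
        Finset.sum_filter_add_sum_filter_not _ _ _
      have hzero2 : ∑ c ∈ Finset.univ.filter (¬ · ∈ S), A q c * m c = 0 :=
        Finset.sum_eq_zero fun c hc => hoff c (by simpa using (Finset.mem_filter.mp hc).2)
      have hS0 : ∑ c ∈ Finset.univ.filter (· ∈ S), A q c * m c = 0 := by
        rw [hsum, hzero2, add_zero] at hsplit
        exact hsplit
      have hsub' : ∑ c ∈ Finset.univ.filter (· ∈ S), A q c * m c
          = ∑ c : S, A q c * m c := by
        refine Finset.sum_subtype _ (fun x => ?_) _
        simp
      rw [hsub'] at hS0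
      show ∑ c : S, M ⟨q, hqS⟩ c * m c = 0
      simpa [hM, block, Matrix.submatrix] using hS0
    -- block A S has nonzero determinant since 0 is not an eigenvalue
    have hdet : M.det ≠ 0 := by
      intro hd
      have hcoeff : M.charpoly.coeff 0 = 0 := by
        have := Matrix.det_eq_sign_charpoly_coeff M
        rw [hd] at this
        rcases mul_eq_zero.mp this.symm with h | h
        · exact absurd h (by positivity)
        · exact h
      have h0 : IsEigenvalue M 0 := by
        unfold IsEigenvalue
        simp [Polynomial.IsRoot, Polynomial.eval_map, Polynomial.eval₂_at_zero, hcoeff]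
      have := hsub 0 h0
      simp at this
    -- kernel is trivial
    have hv : (fun k : S => m k) = 0 := by
      have hu : IsUnit M.det := isUnit_iff_ne_zero.mpr hdet
      calc (fun k : S => m k) = (M⁻¹ * M) *ᵥ (fun k : S => m k) := by
            rw [Matrix.nonsing_inv_mul M hu, Matrix.one_mulVec]
        _ = M⁻¹ *ᵥ (M *ᵥ (fun k : S => m k)) := by rw [Matrix.mulVec_mulVec]
        _ = 0 := by rw [hker, Matrix.mulVec_zero]
    exact congrFun hv ⟨i, hiS⟩
end

section
/- Let S be a critical SCC of the dependence graph of A and let m be a nonnegative fixed point of A. Then A i j · m j = 0 for every i ∈ S and every j ∉ S, and the restriction m_S of m to the vertices of S satisfies A_S · m_S = 0. -/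
open Matrix Filter Topology Polynomial

attribute [local instance] Classical.propDecidable

section Helpers

variable {ι : Type*} [Fintype ι] [DecidableEq ι]

lemma pow_entry_nonneg {P : Matrix ι ι ℝ} (h : ∀ i j, 0 ≤ P i j) (k : ℕ) :
    ∀ i j, 0 ≤ (P ^ k) i j := by
  induction k with
  | zero =>
      intro i j
      rw [pow_zero, Matrix.one_apply]
      split <;> norm_num
  | succ k ih =>
      intro i j
      rw [pow_succ, Matrix.mul_apply]
      exact Finset.sum_nonneg fun l _ => mul_nonneg (ih i l) (h l j)

lemma pow_entry_pos_mono {P : Matrix ι ι ℝ} (h : ∀ i j, 0 ≤ P i j)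
    (hd : ∀ i, 0 < P i i) {k K : ℕ} (hkK : k ≤ K) {i j : ι}
    (hp : 0 < (P ^ k) i j) : 0 < (P ^ K) i j := by
  induction K, hkK using Nat.le_induction with
  | base => exact hp
  | succ K hkK ih =>
      rw [pow_succ', Matrix.mul_apply]
      have h1 : 0 < P i i * (P ^ K) i j := mul_pos (hd i) ih
      refine lt_of_lt_of_le h1 ?_
      exact Finset.single_le_sum
        (fun l _ => mul_nonneg (h i l) (pow_entry_nonneg h K l j)) (Finset.mem_univ i)

lemma mulVec_entry_nonneg {M : Matrix ι ι ℝ} (hM : ∀ i j, 0 ≤ M i j)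
    {y : ι → ℝ} (hy : ∀ i, 0 ≤ y i) (i : ι) : 0 ≤ (M *ᵥ y) i :=
  Finset.sum_nonneg fun l _ => mul_nonneg (hM i l) (hy l)

lemma mulVec_entry_mono {M : Matrix ι ι ℝ} (hM : ∀ i j, 0 ≤ M i j)
    {y z : ι → ℝ} (hyz : ∀ i, y i ≤ z i) (i : ι) : (M *ᵥ y) i ≤ (M *ᵥ z) i :=
  Finset.sum_le_sum fun l _ => mul_le_mul_of_nonneg_left (hyz l) (hM i l)

lemma abs_mulVec_le {M : Matrix ι ι ℝ} (hM : ∀ i j, 0 ≤ M i j)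
    (v : ι → ℝ) (i : ι) : |(M *ᵥ v) i| ≤ (M *ᵥ fun l => |v l|) i := by
  refine (Finset.abs_sum_le_sum_abs _ _).trans ?_
  refine Finset.sum_le_sum fun l _ => ?_
  rw [abs_mul, abs_of_nonneg (hM i l)]

lemma mulVec_const_mul {M : Matrix ι ι ℝ} (a : ℝ) (y : ι → ℝ) (i : ι) :
    (M *ᵥ fun l => a * y l) i = a * (M *ᵥ y) i := by
  simp only [Matrix.mulVec, dotProduct, Finset.mul_sum]
  exact Finset.sum_congr rfl fun l _ => by ring

end Helpers


section Helpers2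

variable {ι : Type*} [Fintype ι]

lemma mulVec_sub_const_mul {M : Matrix ι ι ℝ} (a : ℝ) (y z : ι → ℝ) (i : ι) :
    (M *ᵥ fun l => y l - a * z l) i = (M *ᵥ y) i - a * (M *ᵥ z) i := by
  simp only [Matrix.mulVec, dotProduct, Finset.mul_sum, ← Finset.sum_sub_distrib]
  exact Finset.sum_congr rfl fun l _ => by ring

end Helpers2

/-- for a critical SCC `S` and a nonnegative fixed point `m`, the inflow into
`S` vanishes (`A i j * m j = 0` for `i ∈ S`, `j ∉ S`) and the restriction of `m` to `S`
is a `0`-eigenvector of the block `A_S`. -/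
theorem critical_scc_no_inflow (n : ℕ) (hn : 1 ≤ n)
    (A : Matrix (Fin n) (Fin n) ℝ) (hA : Metzler A)
    (S : Set (Fin n)) (hS : IsSCC A S) (hcrit : Critical A S)
    (m : Fin n → ℝ) (hm : NonnegFixedPoint A m) :
    (∀ i ∈ S, ∀ j ∉ S, A i j * m j = 0) ∧
    block A S *ᵥ (fun i : S => m i) = 0 := by
  classical
  obtain ⟨hub, hSdef⟩ := hS
  have hhub : hub ∈ S := by
    rw [hSdef]; exact ⟨Relation.ReflTransGen.refl, Relation.ReflTransGen.refl⟩
  have hSreach : ∀ {i j : Fin n}, i ∈ S → j ∈ S → Reaches A i j := by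
    intro i j hi hj
    rw [hSdef] at hi hj
    exact Relation.ReflTransGen.trans hi.2 hj.1
  have hmid : ∀ {i j v : Fin n}, i ∈ S → j ∈ S → Reaches A i v → Reaches A v j → v ∈ S := by
    intro i j v hi hj h1 h2
    rw [hSdef] at hi hj ⊢
    exact ⟨Relation.ReflTransGen.trans hi.1 h1, Relation.ReflTransGen.trans h2 hj.2⟩
  haveI : Nonempty S := ⟨⟨hub, hhub⟩⟩
  set B : Matrix S S ℝ := block A S with hB
  set x : S → ℝ := fun i : S => m i with hxdef
  have hxnn : ∀ i : S, 0 ≤ x i := fun i => hm.1 i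
  have hBoff : ∀ i j : S, i ≠ j → 0 ≤ B i j := by
    intro i j hij
    exact hA i.val j.val (fun h => hij (Subtype.ext h))
  set c : S → ℝ := fun i : S =>
    ∑ j ∈ Finset.univ.filter (fun j => j ∉ S), A i.val j * m j with hcdef
  have hcterm : ∀ (i : S) (j : Fin n), j ∉ S → 0 ≤ A i.val j * m j := by
    intro i j hj
    have hne : i.val ≠ j := fun h => hj (h ▸ i.property)
    exact mul_nonneg (hA _ _ hne) (hm.1 j)
  have hcnn : ∀ i : S, 0 ≤ c i := fun i =>
    Finset.sum_nonneg fun j hj => hcterm i j (Finset.mem_filter.mp hj).2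
  have hBx : ∀ i : S, (B *ᵥ x) i = -c i := by
    intro i
    have h0 : ∑ j : Fin n, A i.val j * m j = 0 := congrFun hm.2 i.val
    have hsplit := Finset.sum_filter_add_sum_filter_not Finset.univ (fun j => j ∈ S)
      (fun j => A i.val j * m j)
    have hsub : ∑ j ∈ Finset.univ.filter (fun j => j ∈ S), A i.val j * m j
        = ∑ j : S, A i.val j.val * m j.val :=
      Finset.sum_subtype _ (fun j => by simp) _
    have hmv : (B *ᵥ x) i = ∑ j : S, A i.val j.val * m j.val := by
      simp [hB, block, Matrix.mulVec, dotProduct, Matrix.submatrix_apply, hxdef]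
    have hcc : ∑ j ∈ Finset.univ.filter (fun j => ¬ j ∈ S), A i.val j * m j = c i := rfl
    rw [hmv, ← hsub]
    linarith [hsplit, h0, hcc]
  -- the scaled matrix P = 1 + t • B
  set D : ℝ := 1 + ∑ i : S, |B i i| with hD
  have hDpos : 0 < D := by
    have : 0 ≤ ∑ i : S, |B i i| := Finset.sum_nonneg fun i _ => abs_nonneg _
    linarith
  set t : ℝ := D⁻¹ with ht
  have htpos : 0 < t := inv_pos.mpr hDpos
  have htD : t * D = 1 := inv_mul_cancel₀ hDpos.ne'
  set P : Matrix S S ℝ := 1 + t • B with hP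
  have hPapply : ∀ i j : S, P i j = (if i = j then (1:ℝ) else 0) + t * B i j := by
    intro i j
    simp [hP, Matrix.add_apply, Matrix.one_apply, Matrix.smul_apply, smul_eq_mul]
  have hPdiag : ∀ i : S, 0 < P i i := by
    intro i
    rw [hPapply, if_pos rfl]
    have h1 : |B i i| ≤ ∑ l : S, |B l l| :=
      Finset.single_le_sum (f := fun l : S => |B l l|) (fun l _ => abs_nonneg _)
        (Finset.mem_univ i)
    have h2 : -|B i i| ≤ B i i := neg_abs_le _
    nlinarith [htpos, htD]
  have hPnn : ∀ i j : S, 0 ≤ P i j := by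
    intro i j
    by_cases hij : i = j
    · subst hij; exact (hPdiag i).le
    · rw [hPapply, if_neg hij]
      have := hBoff i j hij
      nlinarith [htpos]
  -- reachability gives positive entries of powers
  have hpos_of_reach : ∀ (jv iv : Fin n), Reaches A jv iv → ∀ (hj : jv ∈ S) (hi : iv ∈ S),
      ∃ k, 0 < (P ^ k) ⟨iv, hi⟩ ⟨jv, hj⟩ := by
    intro jv iv h
    induction h with
    | refl =>
        intro hj hi
        exact ⟨0, by rw [pow_zero, Matrix.one_apply_eq]; norm_num⟩
    | @tail b cc hab hbc ih =>
        intro hj hi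
        have hbS : b ∈ S := hmid hj hi hab (Relation.ReflTransGen.single hbc)
        obtain ⟨k, hk⟩ := ih hj hbS
        refine ⟨k + 1, ?_⟩
        rw [pow_succ', Matrix.mul_apply]
        have hne : (⟨cc, hi⟩ : S) ≠ ⟨b, hbS⟩ := by
          intro e
          exact hbc.1 (congrArg Subtype.val e).symm
        have hPib : 0 < P ⟨cc, hi⟩ ⟨b, hbS⟩ := by
          rw [hPapply, if_neg hne]
          have hAnn : 0 ≤ A cc b := hA cc b (fun e => hbc.1 e.symm)
          have hApos : 0 < A cc b := lt_of_le_of_ne hAnn (Ne.symm hbc.2)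
          have : B ⟨cc, hi⟩ ⟨b, hbS⟩ = A cc b := rfl
          rw [this]
          nlinarith [htpos]
        have h1 : 0 < P ⟨cc, hi⟩ ⟨b, hbS⟩ * (P ^ k) ⟨b, hbS⟩ ⟨jv, hj⟩ := mul_pos hPib hk
        refine lt_of_lt_of_le h1 ?_
        exact Finset.single_le_sum
          (f := fun l : S => P ⟨cc, hi⟩ l * (P ^ k) l ⟨jv, hj⟩)
          (fun l _ => mul_nonneg (hPnn _ l) (pow_entry_nonneg hPnn k l _))
          (Finset.mem_univ (⟨b, hbS⟩ : S))
  have hreach2 : ∀ i j : S, ∃ k, 0 < (P ^ k) i j := by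
    intro i j
    obtain ⟨k, hk⟩ := hpos_of_reach j.val i.val (hSreach j.property i.property)
      j.property i.property
    exact ⟨k, by simpa using hk⟩
  choose K hK using hreach2
  set N : ℕ := Finset.univ.sup (fun p : S × S => K p.1 p.2) with hN
  have hRpos : ∀ i j : S, 0 < (P ^ N) i j := by
    intro i j
    exact pow_entry_pos_mono hPnn hPdiag
      (Finset.le_sup (f := fun p : S × S => K p.1 p.2) (Finset.mem_univ (i, j))) (hK i j)
  -- telescoping identity
  have hPx : P *ᵥ x = fun i => x i - t * c i := by
    funext i
    rw [hP, Matrix.add_mulVec, Matrix.one_mulVec, Matrix.smul_mulVec]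
    have := hBx i
    simp only [Pi.add_apply, Pi.smul_apply, smul_eq_mul, this]
    ring
  have key : ∀ k (i : S),
      x i = ((P ^ k) *ᵥ x) i + t * ∑ j ∈ Finset.range k, ((P ^ j) *ᵥ c) i := by
    intro k
    induction k with
    | zero => intro i; simp [Matrix.one_mulVec]
    | succ k ih =>
        intro i
        have h2 : ((P ^ (k+1)) *ᵥ x) i = ((P ^ k) *ᵥ x) i - t * ((P ^ k) *ᵥ c) i := by
          rw [pow_succ, ← Matrix.mulVec_mulVec, hPx]
          exact mulVec_sub_const_mul t x c i
        rw [h2, Finset.sum_range_succ]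
        have := ih i
        ring_nf
        ring_nf at this
        linarith
  have hbound : ∀ k (i : S), t * ∑ j ∈ Finset.range k, ((P ^ j) *ᵥ c) i ≤ x i := by
    intro k i
    have h1 := key k i
    have h2 : 0 ≤ ((P ^ k) *ᵥ x) i :=
      mulVec_entry_nonneg (pow_entry_nonneg hPnn k) hxnn i
    linarith
  -- core claim : c = 0
  have hczero : ∀ i : S, c i = 0 := by
    by_contra hcon
    push_neg at hcon
    obtain ⟨i₀, hi₀⟩ := hcon
    have hi₀pos : 0 < c i₀ := lt_of_le_of_ne (hcnn i₀) (Ne.symm hi₀)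
    set w : S → ℝ := (P ^ N) *ᵥ c with hw
    have hwpos : ∀ i, 0 < w i := by
      intro i
      have h1 : 0 < (P ^ N) i i₀ * c i₀ := mul_pos (hRpos i i₀) hi₀pos
      refine lt_of_lt_of_le h1 ?_
      exact Finset.single_le_sum
        (f := fun l : S => (P ^ N) i l * c l)
        (fun l _ => mul_nonneg (pow_entry_nonneg hPnn N i l) (hcnn l))
        (Finset.mem_univ i₀)
    have hxpos : ∀ i, 0 < x i := by
      intro i
      have h1 := hbound (N+1) i
      have h2 : w i ≤ ∑ j ∈ Finset.range (N+1), ((P ^ j) *ᵥ c) i :=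
        Finset.single_le_sum (f := fun j => ((P ^ j) *ᵥ c) i)
          (fun j _ => mulVec_entry_nonneg (pow_entry_nonneg hPnn j) hcnn i)
          (Finset.mem_range.mpr (Nat.lt_succ_self N))
      nlinarith [hwpos i, htpos]
    -- a real kernel vector from the eigenvalue 0
    have hdet : B.det = 0 := by
      have h0 : ((B.charpoly).map (algebraMap ℝ ℂ)).IsRoot 0 := hcrit.1
      have h1 : (algebraMap ℝ ℂ) (B.charpoly.eval 0) = 0 := by
        rw [← Polynomial.eval_zero_map]; exact h0
      have h2 : B.charpoly.eval 0 = 0 :=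
        (map_eq_zero_iff _ (algebraMap ℝ ℂ).injective).mp h1
      rw [Matrix.det_eq_sign_charpoly_coeff, Polynomial.coeff_zero_eq_eval_zero, h2, mul_zero]
    obtain ⟨v, hv0, hvB⟩ := Matrix.exists_mulVec_eq_zero_iff.mpr hdet
    have hPv : ∀ k, (P ^ k) *ᵥ v = v := by
      have h1 : P *ᵥ v = v := by
        rw [hP, Matrix.add_mulVec, Matrix.one_mulVec, Matrix.smul_mulVec, hvB]
        simp
      intro k
      induction k with
      | zero => simp [Matrix.one_mulVec]
      | succ k ih => rw [pow_succ', ← Matrix.mulVec_mulVec, ih, h1]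
    have hne : (Finset.univ : Finset S).Nonempty := Finset.univ_nonempty
    set ε : ℝ := Finset.univ.sup' hne (fun l => |v l| / x l) with hεdef
    have hεnn : 0 ≤ ε :=
      le_trans (div_nonneg (abs_nonneg _) (hxpos i₀).le)
        (Finset.le_sup' (fun l => |v l| / x l) (Finset.mem_univ i₀))
    have hvε : ∀ i, |v i| ≤ ε * x i := by
      intro i
      have h1 := Finset.le_sup' (fun l => |v l| / x l) (Finset.mem_univ i)
      calc |v i| = (|v i| / x i) * x i := (div_mul_cancel₀ _ (hxpos i).ne').symm
        _ ≤ ε * x i := mul_le_mul_of_nonneg_right h1 (hxpos i).le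
    set ε₂ : ℝ := Finset.univ.sup' hne (fun l => x l / w l) with hε₂def
    have hε₂nn : 0 ≤ ε₂ :=
      le_trans (div_nonneg (hxnn i₀) (hwpos i₀).le)
        (Finset.le_sup' (fun l => x l / w l) (Finset.mem_univ i₀))
    have hxε₂ : ∀ i, x i ≤ ε₂ * w i := by
      intro i
      have h1 := Finset.le_sup' (fun l => x l / w l) (Finset.mem_univ i)
      calc x i = (x i / w i) * w i := (div_mul_cancel₀ _ (hwpos i).ne').symm
        _ ≤ ε₂ * w i := mul_le_mul_of_nonneg_right h1 (hwpos i).le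
    have hchain : ∀ k (i : S), |v i| ≤ ε * ε₂ * ((P ^ (N + k)) *ᵥ c) i := by
      intro k i
      have h1 : |v i| ≤ ((P ^ k) *ᵥ fun l => |v l|) i := by
        conv_lhs => rw [← hPv k]
        exact abs_mulVec_le (pow_entry_nonneg hPnn k) v i
      have h2 : ((P ^ k) *ᵥ fun l => |v l|) i ≤ ((P ^ k) *ᵥ fun l => ε * x l) i :=
        mulVec_entry_mono (pow_entry_nonneg hPnn k) hvε i
      have h3 : ((P ^ k) *ᵥ fun l => ε * x l) i = ε * ((P ^ k) *ᵥ x) i :=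
        mulVec_const_mul ε x i
      have h4 : ((P ^ k) *ᵥ x) i ≤ ((P ^ k) *ᵥ fun l => ε₂ * w l) i :=
        mulVec_entry_mono (pow_entry_nonneg hPnn k) hxε₂ i
      have h5 : ((P ^ k) *ᵥ fun l => ε₂ * w l) i = ε₂ * ((P ^ k) *ᵥ w) i :=
        mulVec_const_mul ε₂ w i
      have h6 : (P ^ k) *ᵥ w = (P ^ (N + k)) *ᵥ c := by
        rw [hw, Matrix.mulVec_mulVec, ← pow_add, add_comm]
      calc |v i| ≤ ε * ((P ^ k) *ᵥ x) i := by rw [← h3]; exact h1.trans h2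
        _ ≤ ε * (ε₂ * ((P ^ k) *ᵥ w) i) := by
              refine mul_le_mul_of_nonneg_left ?_ hεnn
              rw [← h5]; exact h4
        _ = ε * ε₂ * ((P ^ (N + k)) *ᵥ c) i := by rw [h6]; ring
    have hv_eq : ∀ i : S, v i = 0 := by
      intro i
      by_contra hvi
      have hvip : 0 < |v i| := abs_pos.mpr hvi
      obtain ⟨Kk, hKk⟩ := exists_nat_gt (ε * ε₂ * (x i / t) / |v i|)
      have hsum : (Kk : ℝ) * |v i| ≤ ε * ε₂ * (x i / t) := by
        have h7 : ∑ _k ∈ Finset.range Kk, |v i|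
            ≤ ∑ k ∈ Finset.range Kk, ε * ε₂ * ((P ^ (N + k)) *ᵥ c) i :=
          Finset.sum_le_sum fun k _ => hchain k i
        rw [Finset.sum_const, Finset.card_range, nsmul_eq_mul, ← Finset.mul_sum] at h7
        have e1 : ∑ k ∈ Finset.range Kk, ((P ^ (N + k)) *ᵥ c) i
            = ∑ j ∈ Finset.Ico N (N + Kk), ((P ^ j) *ᵥ c) i := by
          rw [Finset.sum_Ico_eq_sum_range]
          simp
        have h8 : ∑ k ∈ Finset.range Kk, ((P ^ (N + k)) *ᵥ c) i
            ≤ ∑ j ∈ Finset.range (N + Kk), ((P ^ j) *ᵥ c) i := by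
          rw [e1]
          refine Finset.sum_le_sum_of_subset_of_nonneg ?_
            (fun j _ _ => mulVec_entry_nonneg (pow_entry_nonneg hPnn j) hcnn i)
          intro a ha
          simp only [Finset.mem_Ico] at ha
          simp only [Finset.mem_range]
          omega
        have h9 := hbound (N + Kk) i
        have hεε₂ : 0 ≤ ε * ε₂ := mul_nonneg hεnn hε₂nn
        have h10 : ε * ε₂ * ∑ k ∈ Finset.range Kk, ((P ^ (N + k)) *ᵥ c) i
            ≤ ε * ε₂ * (x i / t) := by
          refine mul_le_mul_of_nonneg_left ?_ hεε₂
          refine h8.trans ?_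
          rw [le_div_iff₀ htpos]
          linarith
        linarith
      have h11 : ε * ε₂ * (x i / t) < (Kk : ℝ) * |v i| := by
        rw [div_lt_iff₀ hvip] at hKk
        linarith
      linarith
    exact hv0 (funext hv_eq)
  -- assemble the two conclusions
  have hterm0 : ∀ i ∈ S, ∀ j ∉ S, A i j * m j = 0 := by
    intro i hi j hj
    have h1 : c ⟨i, hi⟩ = 0 := hczero _
    have h2 := (Finset.sum_eq_zero_iff_of_nonneg
      (fun l hl => hcterm ⟨i, hi⟩ l (Finset.mem_filter.mp hl).2)).mp h1
    exact h2 j (Finset.mem_filter.mpr ⟨Finset.mem_univ j, hj⟩)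
  refine ⟨hterm0, ?_⟩
  funext i
  have h1 := hBx i
  rw [hczero i] at h1
  simpa using h1
end

section
/- Suppose no SCC of the dependence graph of A is super-critical. Then every SCC that is immediately upstream of a critical SCC is trivial. -/
open Matrix Filter Topology Polynomial

attribute [local instance] Classical.propDecidable

section Aux

variable {n : ℕ} {A : Matrix (Fin n) (Fin n) ℝ}

lemma mutual_symm' {a b : Fin n} (h : Mutual A a b) : Mutual A b a := ⟨h.2, h.1⟩

lemma mutual_trans' {a b c : Fin n} (h1 : Mutual A a b) (h2 : Mutual A b c) :
    Mutual A a c := ⟨h1.1.trans h2.1, h2.2.trans h1.2⟩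

lemma scc_mutual {S : Set (Fin n)} (hS : IsSCC A S) {a b : Fin n}
    (ha : a ∈ S) (hb : b ∈ S) : Mutual A a b := by
  obtain ⟨x, rfl⟩ := hS
  exact mutual_trans' (mutual_symm' ha) hb

lemma scc_mem_of_mutual {S : Set (Fin n)} (hS : IsSCC A S) {a b : Fin n}
    (ha : a ∈ S) (h : Mutual A a b) : b ∈ S := by
  obtain ⟨x, rfl⟩ := hS
  exact mutual_trans' ha h

lemma scc_eq_of_inter {S T : Set (Fin n)} (hS : IsSCC A S) (hT : IsSCC A T)
    {i : Fin n} (hiS : i ∈ S) (hiT : i ∈ T) : S = T := by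
  ext x
  constructor
  · exact fun hx => scc_mem_of_mutual hT hiT (scc_mutual hS hiS hx)
  · exact fun hx => scc_mem_of_mutual hS hiS (scc_mutual hT hiT hx)

lemma step_zero (hA : Metzler A) {m : Fin n → ℝ} (hm : NonnegFixedPoint A m)
    {a b : Fin n} (he : Edge A a b) (hb : m b = 0) : m a = 0 := by
  have hrow : ∑ l, A b l * m l = 0 := by
    have := congrFun hm.2 b
    simpa [Matrix.mulVec, dotProduct] using this
  have hnn : ∀ l ∈ Finset.univ, (0:ℝ) ≤ A b l * m l := by
    intro l _
    by_cases h : l = b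
    · subst h; rw [hb, mul_zero]
    · exact mul_nonneg (hA b l (Ne.symm h)) (hm.1 l)
  have hz : A b a * m a = 0 :=
    (Finset.sum_eq_zero_iff_of_nonneg hnn).1 hrow a (Finset.mem_univ a)
  rcases mul_eq_zero.1 hz with h | h
  · exact absurd h he.2
  · exact h

lemma prop_zero (hA : Metzler A) {m : Fin n → ℝ} (hm : NonnegFixedPoint A m)
    {a b : Fin n} (h : Reaches A a b) (hb : m b = 0) : m a = 0 := by
  induction h using Relation.ReflTransGen.head_induction_on with
  | refl => exact hb
  | head he _ ih => exact step_zero hA hm he ih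

lemma scc_closure {T P : Set (Fin n)} (hT : IsSCC A T) (hPT : P ⊆ T)
    (hcl : ∀ k ∈ P, ∀ l ∈ T, Edge A l k → l ∈ P)
    {k0 : Fin n} (hk0 : k0 ∈ P) : T ⊆ P := by
  have key : ∀ l : Fin n, Reaches A l k0 → l ∈ T → l ∈ P := by
    intro l h
    induction h using Relation.ReflTransGen.head_induction_on with
    | refl => exact fun _ => hk0
    | @head a c h' h ih =>
      intro haT
      have hcT : c ∈ T := by
        have h1 : Reaches A a c := Relation.ReflTransGen.single h'
        have h2 : Reaches A c a := h.trans (scc_mutual hT (hPT hk0) haT).1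
        exact scc_mem_of_mutual hT haT ⟨h1, h2⟩
      exact hcl c (ih hcT) a haT h'
  intro l hl
  exact key l (scc_mutual hT hl (hPT hk0)).1 hl

end Aux

/-- if no SCC is super-critical, every SCC immediately upstream of a
critical SCC is trivial. -/
theorem trivial_of_immediately_upstream_of_critical (n : ℕ) (hn : 1 ≤ n)
    (A : Matrix (Fin n) (Fin n) ℝ) (hA : Metzler A)
    (hsup : ∀ S : Set (Fin n), IsSCC A S → ¬ SuperCritical A S)
    (S T : Set (Fin n)) (hS : IsSCC A S) (hT : IsSCC A T) (hTcrit : Critical A T)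
    (hup : ImmediatelyUpstream A S T) : TrivialSCC A S := by
  obtain ⟨hSneT, i, hiS, j, hjT, hij⟩ := hup
  intro m hm i' hi'
  have hmnn := hm.1
  have hiT : i ∉ T := fun h => hSneT (scc_eq_of_inter hS hT hiS h)
  have hAjipos : 0 < A j i :=
    lt_of_le_of_ne (hA j i (Ne.symm hij.1)) (Ne.symm hij.2)
  set Tf : Finset (Fin n) := Finset.univ.filter (· ∈ T) with hTfdef
  have hmemTf : ∀ l, l ∈ Tf ↔ l ∈ T := by intro l; simp [hTfdef]
  have hrow : ∀ k, ∑ l, A k l * m l = 0 := by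
    intro k
    have := congrFun hm.2 k
    simpa [Matrix.mulVec, dotProduct] using this
  have hsplit : ∀ k, (∑ l ∈ Tf, A k l * m l)
      + (∑ l ∈ Finset.univ.filter (fun l => ¬ l ∈ T), A k l * m l) = 0 := by
    intro k
    rw [hTfdef, Finset.sum_filter_add_sum_filter_not]
    exact hrow k
  have hcompl_nonneg : ∀ k ∈ T,
      0 ≤ ∑ l ∈ Finset.univ.filter (fun l => ¬ l ∈ T), A k l * m l := by
    intro k hk
    apply Finset.sum_nonneg
    intro l hl
    have hlT : ¬ l ∈ T := (Finset.mem_filter.1 hl).2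
    have hne : l ≠ k := fun h => hlT (h ▸ hk)
    exact mul_nonneg (hA k l (Ne.symm hne)) (hmnn l)
  have hfle : ∀ k ∈ T, ∑ l ∈ Tf, A k l * m l ≤ 0 := by
    intro k hk
    have h1 := hsplit k
    linarith [hcompl_nonneg k hk]
  -- main claim: m i = 0
  have hmi : m i = 0 := by
    by_contra hne
    have hmi_pos : 0 < m i := (hmnn i).lt_of_ne (Ne.symm hne)
    have hfj : ∑ l ∈ Tf, A j l * m l < 0 := by
      have h1 : A j i * m i
          ≤ ∑ l ∈ Finset.univ.filter (fun l => ¬ l ∈ T), A j l * m l := by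
        apply Finset.single_le_sum (f := fun l => A j l * m l)
        · intro l hl
          have hlT : ¬ l ∈ T := (Finset.mem_filter.1 hl).2
          have hne' : l ≠ j := fun h => hlT (h ▸ hjT)
          exact mul_nonneg (hA j l (Ne.symm hne')) (hmnn l)
        · simp [hiT]
      have h2 := hsplit j
      nlinarith [mul_pos hAjipos hmi_pos]
    have hmj_pos : 0 < m j := by
      rcases (hmnn j).lt_or_eq with h | h
      · exact h
      · exfalso
        have hnn : 0 ≤ ∑ l ∈ Tf, A j l * m l := by
          apply Finset.sum_nonneg
          intro l _
          by_cases hlj : l = j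
          · subst hlj; rw [← h, mul_zero]
          · exact mul_nonneg (hA j l (Ne.symm hlj)) (hmnn l)
        linarith
    have hmT_pos : ∀ k ∈ T, 0 < m k := by
      intro k hk
      rcases (hmnn k).lt_or_eq with h | h
      · exact h
      · exfalso
        have hr : Reaches A j k := (scc_mutual hT hjT hk).1
        have := prop_zero hA hm hr h.symm
        linarith
    -- kernel vector of the critical block
    have hcoeff : (block A T).charpoly.coeff 0 = 0 := by
      have h1 : ((block A T).charpoly.map (algebraMap ℝ ℂ)).eval 0 = 0 := hTcrit.1
      rw [Polynomial.eval_map, Polynomial.eval₂_at_zero] at h1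
      exact (algebraMap ℝ ℂ).injective (by simpa using h1)
    have hdet : (block A T).det = 0 := by
      rw [Matrix.det_eq_sign_charpoly_coeff, hcoeff, mul_zero]
    obtain ⟨v, hvne, hvker⟩ := (Matrix.exists_mulVec_eq_zero_iff).2 hdet
    obtain ⟨l0, hl0⟩ : ∃ l0 : T, v l0 ≠ 0 := by
      by_contra hc
      push_neg at hc
      exact hvne (funext hc)
    set w : T → ℝ := if 0 < v l0 then v else -v with hwdef
    have hwker : block A T *ᵥ w = 0 := by
      rw [hwdef]; split
      · exact hvker
      · rw [Matrix.mulVec_neg, hvker, neg_zero]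
    have hwl0 : 0 < w l0 := by
      rw [hwdef]; split
      · assumption
      · next hlt =>
          have : v l0 < 0 := lt_of_le_of_ne (not_lt.1 hlt) hl0
          simpa using this
    set V : Fin n → ℝ := fun l => if h : l ∈ T then w ⟨l, h⟩ else 0 with hVdef
    have hVmem : ∀ (l : Fin n) (h : l ∈ T), V l = w ⟨l, h⟩ := by
      intro l h; simp [hVdef, h]
    have hVrow : ∀ k ∈ T, ∑ l ∈ Tf, A k l * V l = 0 := by
      intro k hk
      have h1 : (block A T *ᵥ w) ⟨k, hk⟩ = 0 := by rw [hwker]; rfl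
      have h2 : (block A T *ᵥ w) ⟨k, hk⟩ = ∑ l : T, A k ↑l * w l := by
        simp [Matrix.mulVec, dotProduct, block, Matrix.submatrix]
      calc ∑ l ∈ Tf, A k l * V l
          = ∑ l : T, A k ↑l * V ↑l := Finset.sum_subtype _ hmemTf _
        _ = ∑ l : T, A k ↑l * w l := by
            apply Finset.sum_congr rfl
            intro l _
            rw [hVmem ↑l l.2]
        _ = 0 := by rw [← h2, h1]
    have hTfne : Tf.Nonempty := ⟨j, (hmemTf j).2 hjT⟩
    obtain ⟨kst, hkstTf, hkst⟩ := Finset.exists_max_image Tf (fun k => V k / m k) hTfne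
    set c : ℝ := V kst / m kst with hcdef
    have hkstT : kst ∈ T := (hmemTf kst).1 hkstTf
    have hcpos : 0 < c := by
      have h1 : 0 < V ↑l0 := by rw [hVmem ↑l0 l0.2]; exact hwl0
      have h2 : 0 < V ↑l0 / m ↑l0 := div_pos h1 (hmT_pos _ l0.2)
      exact lt_of_lt_of_le h2 (hkst ↑l0 ((hmemTf _).2 l0.2))
    have hVle : ∀ k ∈ T, V k ≤ c * m k := by
      intro k hk
      have h1 := hkst k ((hmemTf k).2 hk)
      have h2 := (div_le_iff₀ (hmT_pos k hk)).1 h1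
      linarith [h2]
    set P : Set (Fin n) := {k | k ∈ T ∧ V k = c * m k} with hPdef
    have hPT : P ⊆ T := fun k hk => hk.1
    have hkstP : kst ∈ P := by
      refine ⟨hkstT, ?_⟩
      rw [hcdef, div_mul_cancel₀ _ (ne_of_gt (hmT_pos kst hkstT))]
    have hclosed : ∀ k ∈ P, ∀ l ∈ T, Edge A l k → l ∈ P := by
      intro k hk l hl he
      have hkT := hk.1
      have hterm_nonneg : ∀ l' ∈ Tf, (0:ℝ) ≤ A k l' * (c * m l' - V l') := by
        intro l' hl'
        have hl'T := (hmemTf l').1 hl'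
        by_cases h : l' = k
        · subst h; rw [hk.2]; simp
        · have := hVle l' hl'T
          exact mul_nonneg (hA k l' (Ne.symm h)) (by linarith)
      have hsum_eq : ∑ l' ∈ Tf, A k l' * (c * m l' - V l')
          = c * (∑ l' ∈ Tf, A k l' * m l') - ∑ l' ∈ Tf, A k l' * V l' := by
        rw [Finset.mul_sum, ← Finset.sum_sub_distrib]
        apply Finset.sum_congr rfl
        intro l' _
        ring
      have hsum_le : ∑ l' ∈ Tf, A k l' * (c * m l' - V l') ≤ 0 := by
        rw [hsum_eq, hVrow k hkT]
        nlinarith [hfle k hkT, hcpos]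
      have h0 : ∑ l' ∈ Tf, A k l' * (c * m l' - V l') = 0 :=
        le_antisymm hsum_le (Finset.sum_nonneg hterm_nonneg)
      have hterm : A k l * (c * m l - V l) = 0 :=
        (Finset.sum_eq_zero_iff_of_nonneg hterm_nonneg).1 h0 l ((hmemTf l).2 hl)
      refine ⟨hl, ?_⟩
      rcases mul_eq_zero.1 hterm with h | h
      · exact absurd h he.2
      · linarith
    have hTP : T ⊆ P := scc_closure hT hPT hclosed hkstP
    have hVj : ∑ l ∈ Tf, A j l * V l = c * ∑ l ∈ Tf, A j l * m l := by
      rw [Finset.mul_sum]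
      apply Finset.sum_congr rfl
      intro l hl
      have := (hTP ((hmemTf l).1 hl)).2
      rw [this]; ring
    have hz := hVrow j hjT
    rw [hVj] at hz
    nlinarith [hfj, hcpos]
  exact prop_zero hA hm (scc_mutual hS hi' hiS).1 hmi
end

section
/- Suppose no SCC of the dependence graph of A is super-critical, and let S be a critical SCC that is non-trivial. Then there exists a strictly positive vector φ on the vertices of S with A_S·φ = 0 such that for every nonnegative fixed point m of A, the restriction of m to S equals α·φ for some scalar α ≥ 0; that is, the possible steady states on S form the one-dimensional family of nonnegative multiples of the dominant eigenvector φ of A_S. -/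
open Matrix Filter Topology Polynomial

attribute [local instance] Classical.propDecidable

section AuxiliaryLemmas

variable {n : ℕ} {A : Matrix (Fin n) (Fin n) ℝ}

lemma support_step (hA : Metzler A) {m : Fin n → ℝ} (hm : NonnegFixedPoint A m)
    {a b : Fin n} (e : Edge A a b) (ha : 0 < m a) : 0 < m b := by
  obtain ⟨hmn, hfix⟩ := hm
  obtain ⟨hne, hAba⟩ := e
  rcases (hmn b).lt_or_eq with h | h
  · exact h
  exfalso
  have hrow : ∑ j, A b j * m j = 0 := by
    have := congrFun hfix b
    simpa [Matrix.mulVec, dotProduct] using this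
  have hterms : ∀ j ∈ Finset.univ, 0 ≤ A b j * m j := by
    intro j _
    by_cases hj : j = b
    · rw [hj, ← h, mul_zero]
    · exact mul_nonneg (hA b j fun hbj => hj hbj.symm) (hmn j)
  have hz := (Finset.sum_eq_zero_iff_of_nonneg hterms).mp hrow a (Finset.mem_univ a)
  exact mul_ne_zero hAba (ne_of_gt ha) hz

lemma support_reaches (hA : Metzler A) {m : Fin n → ℝ} (hm : NonnegFixedPoint A m)
    {a b : Fin n} (h : Reaches A a b) (ha : 0 < m a) : 0 < m b := by
  induction h with
  | refl => exact ha
  | tail _ e ih => exact support_step hA hm e ih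

lemma reaches_in_scc {i₀ a b : Fin n} (ha : Mutual A i₀ a) (h : Reaches A a b) :
    Mutual A i₀ b →
      Relation.ReflTransGen (fun x y => Mutual A i₀ x ∧ Mutual A i₀ y ∧ Edge A x y) a b := by
  induction h with
  | refl => exact fun _ => Relation.ReflTransGen.refl
  | @tail c d h e ih =>
      intro hb
      have hc : Mutual A i₀ c := ⟨ha.1.trans h, (Relation.ReflTransGen.single e).trans hb.2⟩
      exact (ih hc).tail ⟨hc, hb, e⟩

lemma back_prop {α : Type*} {R : α → α → Prop} {P : α → Prop} {a b : α}
    (h : Relation.ReflTransGen R a b) (step : ∀ x y, R x y → P y → P x) : P b → P a := by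
  induction h with
  | refl => exact id
  | @tail c d h e ih => exact fun hd => ih (step c d e hd)

lemma scc_prop {i₀ : Fin n} {S : Set (Fin n)} (hSdef : S = {j | Mutual A i₀ j})
    {P : S → Prop}
    (step : ∀ x y : S, block A S y x ≠ 0 → P y → P x)
    {b : S} (hb : P b) (a : S) : P a := by
  subst hSdef
  have ha' : Mutual A i₀ a.1 := a.2
  have hb' : Mutual A i₀ b.1 := b.2
  have hpath := reaches_in_scc ha' (ha'.2.trans hb'.1) hb'
  have key : (∀ hx : Mutual A i₀ b.1, P ⟨b.1, hx⟩) →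
      (∀ hx : Mutual A i₀ a.1, P ⟨a.1, hx⟩) := by
    refine back_prop (P := fun x => ∀ hx : Mutual A i₀ x, P ⟨x, hx⟩) hpath ?_
    rintro x y ⟨hx, hy, hxy⟩ hPy hx'
    exact step ⟨x, hx'⟩ ⟨y, hy⟩ hxy.2 (hPy hy)
  exact key (fun hx => hb) a.2

lemma block_step {S : Set (Fin n)} (hA : Metzler A) {w : S → ℝ}
    (hw : ∀ j, 0 ≤ w j) {i : S} (hle : (block A S *ᵥ w) i ≤ 0) (hi : w i = 0) :
    (block A S *ᵥ w) i = 0 ∧ ∀ j, block A S i j ≠ 0 → w j = 0 := by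
  classical
  have hexp : (block A S *ᵥ w) i = ∑ j : S, block A S i j * w j := by
    simp [Matrix.mulVec, dotProduct]
  have hterms : ∀ j ∈ Finset.univ.erase i, 0 ≤ block A S i j * w j := by
    intro j hj
    have hji : j ≠ i := (Finset.mem_erase.mp hj).1
    have hne : (i : Fin n) ≠ (j : Fin n) := fun h => hji (Subtype.ext h.symm)
    exact mul_nonneg (hA _ _ hne) (hw j)
  have hsplit : (block A S *ᵥ w) i = ∑ j ∈ Finset.univ.erase i, block A S i j * w j := by
    rw [hexp, ← Finset.add_sum_erase _ _ (Finset.mem_univ i), hi, mul_zero, zero_add]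
  have hnn : 0 ≤ (block A S *ᵥ w) i := hsplit ▸ Finset.sum_nonneg hterms
  have h0 : (block A S *ᵥ w) i = 0 := le_antisymm hle hnn
  refine ⟨h0, fun j hBij => ?_⟩
  by_cases hji : j = i
  · rw [hji]; exact hi
  · have hz := (Finset.sum_eq_zero_iff_of_nonneg hterms).mp (by rw [← hsplit, h0]) j
      (Finset.mem_erase.mpr ⟨hji, Finset.mem_univ j⟩)
    rcases mul_eq_zero.mp hz with h | h
    · exact absurd h hBij
    · exact h

lemma flux_zero {i₀ : Fin n} {S : Set (Fin n)} (hSdef : S = {j | Mutual A i₀ j})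
    (hA : Metzler A) (hcrit0 : IsEigenvalue (block A S) 0)
    {φ : S → ℝ} (hφ : ∀ i, 0 < φ i) (hle : ∀ i, (block A S *ᵥ φ) i ≤ 0) :
    block A S *ᵥ φ = 0 := by
  classical
  by_contra hne0
  obtain ⟨r, hr⟩ : ∃ r, (block A S *ᵥ φ) r < 0 := by
    by_contra hall
    push_neg at hall
    exact hne0 (funext fun i => le_antisymm (hle i) (hall i))
  haveI : Nonempty S := ⟨r⟩
  have hdet : (block A S).det = 0 := by
    have h1 : ((block A S).charpoly.map (algebraMap ℝ ℂ)).eval 0 = 0 := hcrit0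
    rw [← Polynomial.coeff_zero_eq_eval_zero, Polynomial.coeff_map] at h1
    have h2 : (block A S).charpoly.coeff 0 = 0 := by
      simpa using h1
    rw [Matrix.det_eq_sign_charpoly_coeff, h2, mul_zero]
  obtain ⟨v, hv0, hBv⟩ := Matrix.exists_mulVec_eq_zero_iff.mpr hdet
  have inner : ∀ v : S → ℝ, block A S *ᵥ v = 0 → (∃ i, 0 < v i) → False := by
    rintro v hBv ⟨i₁, hi₁⟩
    set c := Finset.univ.sup' Finset.univ_nonempty (fun i : S => v i / φ i) with hcdef
    have hcpos : 0 < c :=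
      lt_of_lt_of_le (div_pos hi₁ (hφ i₁))
        (Finset.le_sup' (fun i : S => v i / φ i) (Finset.mem_univ i₁))
    have hub : ∀ j, v j ≤ c * φ j := by
      intro j
      have h1 : v j / φ j ≤ c := Finset.le_sup' (fun i : S => v i / φ i) (Finset.mem_univ j)
      have := (div_le_iff₀ (hφ j)).mp h1
      linarith [this]
    obtain ⟨istar, _, hstar⟩ :=
      Finset.exists_mem_eq_sup' Finset.univ_nonempty (fun i : S => v i / φ i)
    set w : S → ℝ := fun j => c * φ j - v j with hwdef
    have hwnn : ∀ j, 0 ≤ w j := fun j => sub_nonneg.mpr (hub j)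
    have hwstar : w istar = 0 := by
      have h1 : v istar / φ istar = c := hstar.symm
      have h2 : v istar = c * φ istar := (div_eq_iff (ne_of_gt (hφ istar))).mp h1
      simp [hwdef, h2]
    have hBw : ∀ i, (block A S *ᵥ w) i = c * (block A S *ᵥ φ) i := by
      intro i
      have hw2 : w = c • φ - v := by funext j; simp [hwdef, smul_eq_mul]
      rw [hw2, Matrix.mulVec_sub, Matrix.mulVec_smul, hBv]
      simp [smul_eq_mul]
    have hBwle : ∀ i, (block A S *ᵥ w) i ≤ 0 := by
      intro i
      rw [hBw i]
      have := mul_le_mul_of_nonneg_left (hle i) hcpos.le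
      simpa using this
    have wr : w r = 0 :=
      scc_prop hSdef (fun x y hB hy => (block_step hA hwnn (hBwle y) hy).2 x hB) hwstar r
    have h0 := (block_step hA hwnn (hBwle r) wr).1
    rw [hBw r] at h0
    rcases mul_eq_zero.mp h0 with h | h
    · exact absurd h (ne_of_gt hcpos)
    · exact absurd h (ne_of_lt hr)
  obtain ⟨i₁, hi₁⟩ := Function.ne_iff.mp hv0
  have hi₁' : v i₁ ≠ 0 := by simpa using hi₁
  rcases hi₁'.lt_or_gt with h | h
  · exact inner (-v) (by rw [Matrix.mulVec_neg, hBv, neg_zero])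
      ⟨i₁, by simp only [Pi.neg_apply]; exact neg_pos.mpr h⟩
  · exact inner v hBv ⟨i₁, h⟩

lemma unique_dir {i₀ : Fin n} {S : Set (Fin n)} (hSdef : S = {j | Mutual A i₀ j})
    (hA : Metzler A) [Nonempty S] {φ ψ : S → ℝ} (hφ : ∀ i, 0 < φ i) (hψ : ∀ i, 0 ≤ ψ i)
    (hBφ : block A S *ᵥ φ = 0) (hBψ : block A S *ᵥ ψ = 0) :
    ∃ α : ℝ, 0 ≤ α ∧ ∀ i, ψ i = α * φ i := by
  classical
  set α := Finset.univ.inf' Finset.univ_nonempty (fun i : S => ψ i / φ i) with hαdef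
  obtain ⟨istar, _, hstar⟩ :=
    Finset.exists_mem_eq_inf' Finset.univ_nonempty (fun i : S => ψ i / φ i)
  have hαnn : 0 ≤ α := by
    rw [hαdef, hstar]; exact div_nonneg (hψ istar) (hφ istar).le
  have hlb : ∀ j, α * φ j ≤ ψ j := by
    intro j
    have h1 : α ≤ ψ j / φ j := Finset.inf'_le (fun i : S => ψ i / φ i) (Finset.mem_univ j)
    exact (le_div_iff₀ (hφ j)).mp h1
  set w : S → ℝ := fun j => ψ j - α * φ j with hwdef
  have hwnn : ∀ j, 0 ≤ w j := fun j => sub_nonneg.mpr (hlb j)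
  have hwstar : w istar = 0 := by
    have h1 : ψ istar / φ istar = α := hstar.symm
    have h2 : ψ istar = α * φ istar := (div_eq_iff (ne_of_gt (hφ istar))).mp h1
    simp [hwdef, h2]
  have hBw : ∀ i, (block A S *ᵥ w) i = 0 := by
    intro i
    have hw2 : w = ψ - α • φ := by funext j; simp [hwdef, smul_eq_mul]
    rw [hw2, Matrix.mulVec_sub, Matrix.mulVec_smul, hBφ, hBψ]
    simp
  have hall : ∀ i : S, w i = 0 :=
    scc_prop hSdef (fun x y hB hy => (block_step hA hwnn (hBw y).le hy).2 x hB) hwstar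
  exact ⟨α, hαnn, fun i => by have := hall i; simp [hwdef] at this; linarith⟩

lemma mulVec_restrict_nonpos {S : Set (Fin n)} (hA : Metzler A) {m : Fin n → ℝ}
    (hm : NonnegFixedPoint A m) (i : S) :
    (block A S *ᵥ fun j : S => m j) i ≤ 0 := by
  classical
  have htot : ∑ j, A i.1 j * m j = 0 := by
    have := congrFun hm.2 i.1
    simpa [Matrix.mulVec, dotProduct] using this
  have hsub : (block A S *ᵥ fun j : S => m j) i
      = ∑ j ∈ Finset.univ.filter (fun j => j ∈ S), A i.1 j * m j := by
    have h1 : (block A S *ᵥ fun j : S => m j) i = ∑ j : S, A i.1 j.1 * m j.1 := by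
      simp [Matrix.mulVec, dotProduct, block, Matrix.submatrix]
    rw [h1]
    exact (Finset.sum_subtype (p := fun j => j ∈ S)
      (Finset.univ.filter (fun j => j ∈ S))
      (fun x => by simp) (fun j => A i.1 j * m j)).symm
  have hsplit := Finset.sum_filter_add_sum_filter_not Finset.univ (fun j => j ∈ S)
    (fun j => A i.1 j * m j)
  have hnn : 0 ≤ ∑ j ∈ Finset.univ.filter (fun j => ¬ j ∈ S), A i.1 j * m j := by
    apply Finset.sum_nonneg
    intro j hj
    have hjS : ¬ j ∈ S := (Finset.mem_filter.mp hj).2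
    have hne : i.1 ≠ j := fun h => hjS (h ▸ i.2)
    exact mul_nonneg (hA _ _ hne) (hm.1 j)
  rw [htot] at hsplit
  rw [hsub]
  linarith

end AuxiliaryLemmas

/-- on a non-trivial critical SCC (no super-critical SCCs present), the
steady states form the one-dimensional family of nonnegative multiples of a positive
dominant (`0`-)eigenvector `φ` of the block `A_S`. -/
theorem steady_state_on_free_block (n : ℕ) (hn : 1 ≤ n)
    (A : Matrix (Fin n) (Fin n) ℝ) (hA : Metzler A)
    (hsup : ∀ S : Set (Fin n), IsSCC A S → ¬ SuperCritical A S)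
    (S : Set (Fin n)) (hS : IsSCC A S) (hcrit : Critical A S)
    (hnt : ¬ TrivialSCC A S) :
    ∃ φ : S → ℝ, (∀ i : S, 0 < φ i) ∧ block A S *ᵥ φ = 0 ∧
      ∀ m : Fin n → ℝ, NonnegFixedPoint A m →
        ∃ α : ℝ, 0 ≤ α ∧ ∀ i : S, m i = α * φ i := by
  obtain ⟨i₀, hSdef⟩ := hS
  have hi₀S : i₀ ∈ S := by rw [hSdef]; exact ⟨Relation.ReflTransGen.refl, Relation.ReflTransGen.refl⟩
  haveI : Nonempty S := ⟨⟨i₀, hi₀S⟩⟩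
  rw [TrivialSCC] at hnt
  push_neg at hnt
  obtain ⟨m₀, hm₀, a, haS, ha0⟩ := hnt
  have hapos : 0 < m₀ a := (hm₀.1 a).lt_of_ne (Ne.symm ha0)
  have hmemS : ∀ x : Fin n, x ∈ S → Mutual A i₀ x := by
    intro x hx; rw [hSdef] at hx; exact hx
  have hposS : ∀ j ∈ S, 0 < m₀ j := by
    intro j hjS
    exact support_reaches hA hm₀ ((hmemS a haS).2.trans (hmemS j hjS).1) hapos
  have hφpos : ∀ i : S, 0 < m₀ i.1 := fun i => hposS i.1 i.2
  have hBφ : (block A S *ᵥ fun j : S => m₀ j.1) = 0 :=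
    flux_zero hSdef hA hcrit.1 hφpos (mulVec_restrict_nonpos hA hm₀)
  refine ⟨fun i => m₀ i.1, hφpos, hBφ, ?_⟩
  intro m hm
  by_cases hz : ∀ i : S, m i.1 = 0
  · exact ⟨0, le_refl 0, fun i => by rw [hz i, zero_mul]⟩
  · push_neg at hz
    obtain ⟨i₁, hi₁⟩ := hz
    have hpos : ∀ i : S, 0 < m i.1 := by
      intro i
      have h1 : 0 < m i₁.1 := (hm.1 i₁.1).lt_of_ne (Ne.symm hi₁)
      exact support_reaches hA hm
        ((hmemS i₁.1 i₁.2).2.trans (hmemS i.1 i.2).1) h1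
    have hBψ : (block A S *ᵥ fun j : S => m j.1) = 0 :=
      flux_zero hSdef hA hcrit.1 hpos (mulVec_restrict_nonpos hA hm)
    exact unique_dir hSdef hA hφpos (fun i => hm.1 i.1) hBφ hBψ
end

section
/- Suppose no SCC of the dependence graph of A is super-critical, and let S be a critical SCC such that no critical SCC T with T ≠ S is downstream of S. Then there exists a nonnegative fixed point m of A such that for every vertex i: m i > 0 if and only if some vertex of S reaches i. In particular, m is strictly positive on S and on every vertex reachable from S, and zero elsewhere. -/
/-
Let `R` be the set of vertices reachable from `S`. By Perron–Frobenius, in its Collatz–Wielandt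
form, every irreducible Metzler block has a positive eigenvector with a real eigenvalue. When that
eigenvalue is negative, a minimum principle makes the block invertible with `A_C y ≤ 0 → y ≥ 0`.
Hence the eigenvalue is `0` for the critical block `A_S`, and negative for every other component
`C` in `R`, which is neither critical nor super-critical.
Starting from the Perron vector of `A_S` and adding the components of `R` one at a time, in an
order compatible with reachability, each new component receives a nonnegative solution of
`A_C y = -(A x)_C`; this ends with a nonnegative fixed point supported in `R` and positive on `S`.
Its support is closed under reachability: at a zero `m i = 0` of a nonnegative fixed point,
`0 = (A m) i = ∑_{j ≠ i} A i j m j` forces `m j = 0` along every edge `j → i`.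
-/

open Matrix Filter Topology Polynomial

attribute [local instance] Classical.propDecidable

section Metzler

variable {ι : Type*} [Fintype ι]

theorem isEigenvalue_ofReal_iff [DecidableEq ι] (M : Matrix ι ι ℝ) (r : ℝ) :
    IsEigenvalue M r ↔ ∃ v ≠ 0, M *ᵥ v = r • v := by
  rw [IsEigenvalue, ← Complex.coe_algebraMap, isRoot_map_iff (algebraMap ℝ ℂ).injective,
    IsRoot, eval_charpoly, ← exists_mulVec_eq_zero_iff]
  simp only [sub_mulVec, scalar_apply, sub_eq_zero, eq_comm, ← smul_one_eq_diagonal,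
    smul_mulVec, one_mulVec]

theorem single_le_mulVec_apply_of_eq_zero {M : Matrix ι ι ℝ}
    (hM : ∀ i j, i ≠ j → 0 ≤ M i j) {w : ι → ℝ} (hw : ∀ i, 0 ≤ w i) {k : ι} (hk : w k = 0)
    (j : ι) : M k j * w j ≤ (M *ᵥ w) k := by
  refine Finset.single_le_sum (f := fun j => M k j * w j) (fun l _ => ?_) (Finset.mem_univ j)
  rcases eq_or_ne k l with rfl | hkl
  · simp [hk]
  · exact mul_nonneg (hM k l hkl) (hw l)

theorem nonneg_of_mulVec_nonpos {M : Matrix ι ι ℝ} (hM : ∀ i j, i ≠ j → 0 ≤ M i j)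
    {v : ι → ℝ} (hv : ∀ i, 0 < v i) (hMv : ∀ i, (M *ᵥ v) i < 0)
    {y : ι → ℝ} (hMy : ∀ i, (M *ᵥ y) i ≤ 0) (i : ι) : 0 ≤ y i := by
  by_contra! hyi
  obtain ⟨k, -, hk⟩ := Finset.univ.exists_max_image (fun i => -y i / v i) ⟨i, Finset.mem_univ i⟩
  set t := -y k / v k
  have ht : 0 < t := lt_of_lt_of_le (div_pos (neg_pos.2 hyi) (hv i)) (hk i (Finset.mem_univ i))
  -- `t` is the least shift making `y + t • v` nonnegative, so `w` vanishes at `k`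
  set w := y + t • v
  have hw : ∀ j, 0 ≤ w j := fun j => by
    have := (div_le_iff₀ (hv j)).1 (hk j (Finset.mem_univ j))
    simp only [w, Pi.add_apply, Pi.smul_apply, smul_eq_mul]
    linarith
  have hwk : w k = 0 := by
    simp only [w, t, Pi.add_apply, Pi.smul_apply, smul_eq_mul]
    field_simp [(hv k).ne']
    ring
  have hMw : (M *ᵥ w) k = (M *ᵥ y) k + t * (M *ᵥ v) k := by
    simp [w, mulVec_add, mulVec_smul]
  have := single_le_mulVec_apply_of_eq_zero hM hw hwk k
  rw [hwk, mul_zero, hMw] at this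
  nlinarith [hMy k, hMv k]

theorem mulVec_injective_of_pos_of_mulVec_neg {M : Matrix ι ι ℝ}
    (hM : ∀ i j, i ≠ j → 0 ≤ M i j) {v : ι → ℝ} (hv : ∀ i, 0 < v i)
    (hMv : ∀ i, (M *ᵥ v) i < 0) : Function.Injective M.mulVec := by
  refine (injective_iff_map_eq_zero M.mulVecLin).2 fun z hz => funext fun i => ?_
  have hz' : M *ᵥ z = 0 := hz
  have h₁ := nonneg_of_mulVec_nonpos hM hv hMv (y := z) (by simp [hz']) i
  have h₂ := nonneg_of_mulVec_nonpos hM hv hMv (y := -z) (by simp [mulVec_neg, hz']) i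
  simp only [Pi.neg_apply, Left.nonneg_neg_iff] at h₂
  exact le_antisymm h₂ h₁

theorem exists_nonneg_mulVec_eq [DecidableEq ι] {M : Matrix ι ι ℝ} (hM : ∀ i j, i ≠ j → 0 ≤ M i j)
    {v : ι → ℝ} (hv : ∀ i, 0 < v i) (hMv : ∀ i, (M *ᵥ v) i < 0)
    {b : ι → ℝ} (hb : ∀ i, b i ≤ 0) : ∃ y, (∀ i, 0 ≤ y i) ∧ M *ᵥ y = b := by
  have hunit := mulVec_injective_iff_isUnit.1 (mulVec_injective_of_pos_of_mulVec_neg hM hv hMv)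
  obtain ⟨y, hy⟩ := mulVec_surjective_iff_isUnit.2 hunit b
  exact ⟨y, nonneg_of_mulVec_nonpos hM hv hMv (fun i => hy ▸ hb i), hy⟩

end Metzler

section PerronFrobenius

variable {ι : Type*} [Fintype ι]

theorem pow_succ_apply_pos [DecidableEq ι] {P : Matrix ι ι ℝ} (hP : ∀ i j, 0 ≤ P i j)
    {k : ℕ} {a b c : ι} (hcb : 0 < P c b) (hba : 0 < (P ^ k) b a) : 0 < (P ^ (k + 1)) c a := by
  rw [pow_succ', mul_apply]
  exact Finset.sum_pos' (fun x _ => mul_nonneg (hP c x) (pow_apply_nonneg hP k x a))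
    ⟨b, Finset.mem_univ b, mul_pos hcb hba⟩

theorem exists_pow_pos [DecidableEq ι] {P : Matrix ι ι ℝ} (hP : ∀ i j, 0 ≤ P i j)
    (hdiag : ∀ i, 0 < P i i) (hconn : ∀ i j, Relation.ReflTransGen (fun a b => 0 < P b a) i j) :
    ∃ K, ∀ i j, 0 < (P ^ K) i j := by
  have hpath {a b : ι} (h : Relation.ReflTransGen (fun a b => 0 < P b a) a b) :
      ∃ k, 0 < (P ^ k) b a := by
    induction h with
    | refl => exact ⟨0, by simp⟩
    | tail _ hbc ih =>
      obtain ⟨k, hk⟩ := ih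
      exact ⟨k + 1, pow_succ_apply_pos hP hbc hk⟩
  -- the positive diagonal keeps an entry positive in all higher powers
  have heventually (i j : ι) : ∀ᶠ K in Filter.atTop, 0 < (P ^ K) i j := by
    obtain ⟨k, hk⟩ := hpath (hconn j i)
    exact Filter.eventually_atTop.2 ⟨k, fun K hK =>
      Nat.le_induction hk (fun K _ ih => pow_succ_apply_pos hP (hdiag i) ih) K hK⟩
  exact (Filter.eventually_all.2 fun i => Filter.eventually_all.2 (heventually i)).exists

theorem mulVec_apply_pos {Q : Matrix ι ι ℝ} (hQ : ∀ i j, 0 < Q i j) {w : ι → ℝ}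
    (hw : ∀ i, 0 ≤ w i) (hw0 : w ≠ 0) (i : ι) : 0 < (Q *ᵥ w) i := by
  obtain ⟨j, hj⟩ := Function.ne_iff.1 hw0
  exact Finset.sum_pos' (fun k _ => mul_nonneg (hQ i k).le (hw k))
    ⟨j, Finset.mem_univ j, mul_pos (hQ i j) (lt_of_le_of_ne (hw j) (Ne.symm hj))⟩

theorem exists_pos_smul_le [Nonempty ι] {y z : ι → ℝ} (hy : ∀ i, 0 < y i)
    (hz : ∀ i, 0 < z i) : ∃ δ : ℝ, 0 < δ ∧ δ • y ≤ z := by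
  obtain ⟨k, -, hk⟩ := Finset.univ.exists_min_image (fun i => z i / y i) Finset.univ_nonempty
  exact ⟨z k / y k, div_pos (hz k) (hy k),
    fun i => (le_div_iff₀ (hy i)).1 (hk i (Finset.mem_univ i))⟩

theorem le_sum_abs_of_smul_le_mulVec {M : Matrix ι ι ℝ} {t : ℝ} {x : ι → ℝ}
    (hx : x ∈ stdSimplex ℝ ι) (htx : t • x ≤ M *ᵥ x) : t ≤ ∑ i, ∑ j, |M i j| := by
  have hx1 (j : ι) : x j ≤ 1 := hx.2 ▸ Finset.single_le_sum (fun i _ => hx.1 i) (Finset.mem_univ j)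
  calc t = ∑ i, t * x i := by rw [← Finset.mul_sum, hx.2, mul_one]
    _ ≤ ∑ i, ∑ j, M i j * x j := Finset.sum_le_sum fun i _ => htx i
    _ ≤ ∑ i, ∑ j, |M i j| := Finset.sum_le_sum fun i _ => Finset.sum_le_sum fun j _ =>
        (le_abs_self _).trans ((abs_mul _ _).trans_le
          (mul_le_of_le_one_right (abs_nonneg _) ((abs_of_nonneg (hx.1 j)).trans_le (hx1 j))))

/-- The Collatz–Wielandt set of `M`. Only the lower bound on `t` is a real constraint (it makes
the set compact): the upper one follows from `le_sum_abs_of_smul_le_mulVec`. -/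
def collatzWielandtSet (M : Matrix ι ι ℝ) : Set (ℝ × (ι → ℝ)) :=
  {p | p.1 ∈ Set.Icc (-∑ i, ∑ j, |M i j|) (∑ i, ∑ j, |M i j|) ∧ p.2 ∈ stdSimplex ℝ ι ∧
    p.1 • p.2 ≤ M *ᵥ p.2}

theorem isCompact_collatzWielandtSet (M : Matrix ι ι ℝ) :
    IsCompact (collatzWielandtSet M) := by
  refine (isCompact_Icc.prod (isCompact_stdSimplex ℝ ι)).of_isClosed_subset ?_
    fun p hp => ⟨hp.1, hp.2.1⟩
  refine (isClosed_Icc.preimage continuous_fst).inter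
    (((isClosed_stdSimplex ℝ ι).preimage continuous_snd).inter
      (isClosed_le (f := fun p : ℝ × (ι → ℝ) => p.1 • p.2) (g := fun p => M *ᵥ p.2) ?_ ?_))
  · exact continuous_fst.smul continuous_snd
  · exact (M.mulVecLin.continuous_of_finiteDimensional).comp continuous_snd

theorem mem_collatzWielandtSet {M : Matrix ι ι ℝ} {t : ℝ} {w : ι → ℝ}
    (ht : -∑ i, ∑ j, |M i j| ≤ t) (hw : ∀ i, 0 ≤ w i) (hw0 : w ≠ 0) (htw : t • w ≤ M *ᵥ w) :
    (t, (∑ i, w i)⁻¹ • w) ∈ collatzWielandtSet M := by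
  have hsum : 0 < ∑ i, w i := by
    obtain ⟨j, hj⟩ := Function.ne_iff.1 hw0
    exact Finset.sum_pos' (fun i _ => hw i) ⟨j, Finset.mem_univ j, lt_of_le_of_ne (hw j) hj.symm⟩
  have hsimplex : (∑ i, w i)⁻¹ • w ∈ stdSimplex ℝ ι :=
    ⟨fun i => smul_nonneg (inv_nonneg.2 hsum.le) (hw i), by
      simp only [Pi.smul_apply, smul_eq_mul, ← Finset.mul_sum, inv_mul_cancel₀ hsum.ne']⟩
  have hle : t • (∑ i, w i)⁻¹ • w ≤ M *ᵥ (∑ i, w i)⁻¹ • w := by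
    rw [smul_comm, mulVec_smul]
    exact smul_le_smul_of_nonneg_left htw (inv_nonneg.2 hsum.le)
  exact ⟨⟨ht, le_sum_abs_of_smul_le_mulVec hsimplex hle⟩, hsimplex, hle⟩

theorem exists_pos_eigenvector_of_commute [Nonempty ι] (M : Matrix ι ι ℝ) {Q : Matrix ι ι ℝ}
    (hQ : ∀ i j, 0 < Q i j) (hMQ : Commute M Q) :
    ∃ r : ℝ, ∃ v : ι → ℝ, (∀ i, 0 < v i) ∧ M *ᵥ v = r • v := by
  set B := ∑ i, ∑ j, |M i j|
  have hconst : (-B) • (fun _ => 1 : ι → ℝ) ≤ M *ᵥ fun _ => 1 := fun i => by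
    have hrow : ∑ j, |M i j| ≤ B :=
      Finset.single_le_sum (f := fun i => ∑ j, |M i j|) (fun _ _ => by positivity)
        (Finset.mem_univ i)
    have := (Finset.abs_sum_le_sum_abs (fun j => M i j) Finset.univ).trans hrow
    simp only [Pi.smul_apply, smul_eq_mul, mul_one, mulVec, dotProduct]
    linarith [neg_abs_le (∑ j, M i j)]
  obtain ⟨⟨r, x⟩, ⟨⟨hrB, -⟩, hx, hrx⟩, hmax⟩ := (isCompact_collatzWielandtSet M).exists_isMaxOn
    ⟨_, mem_collatzWielandtSet le_rfl (fun _ => zero_le_one) (Function.ne_iff.2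
      ⟨Classical.arbitrary ι, one_ne_zero⟩) hconst⟩ continuous_fst.continuousOn
  have hx0 : x ≠ 0 := by
    rintro rfl
    simpa using hx.2
  have hQx := mulVec_apply_pos hQ hx.1 hx0
  have hMQx : M *ᵥ (Q *ᵥ x) = Q *ᵥ (M *ᵥ x) := by
    rw [mulVec_mulVec, hMQ.eq, ← mulVec_mulVec]
  -- If `u = M x - r x ≠ 0` then `Q u > 0`, so `Q x` admits a Collatz–Wielandt value above `r`.
  have hMx : M *ᵥ x = r • x := by
    by_contra hne
    set u := M *ᵥ x - r • x
    obtain ⟨δ, hδ, hδu⟩ := exists_pos_smul_le hQx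
      (mulVec_apply_pos hQ (fun i => sub_nonneg.2 (hrx i)) (sub_ne_zero.2 hne))
    have hle : (r + δ) • (Q *ᵥ x) ≤ M *ᵥ (Q *ᵥ x) := by
      have : M *ᵥ x = r • x + u := by simp [u]
      rw [hMQx, this, mulVec_add, mulVec_smul, add_smul]
      exact add_le_add_right hδu _
    have := isMaxOn_iff.1 hmax _ (mem_collatzWielandtSet (by linarith) (fun i => (hQx i).le)
      (Function.ne_iff.2 ⟨Classical.arbitrary ι, (hQx _).ne'⟩) hle)
    linarith
  exact ⟨r, Q *ᵥ x, hQx, by rw [hMQx, hMx, mulVec_smul]⟩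

def IsStronglyConnected (M : Matrix ι ι ℝ) : Prop :=
  ∀ i j, Relation.ReflTransGen (fun a b => a ≠ b ∧ M b a ≠ 0) i j

theorem exists_pos_eigenvector [DecidableEq ι] [Nonempty ι] {M : Matrix ι ι ℝ}
    (hM : ∀ i j, i ≠ j → 0 ≤ M i j) (hconn : IsStronglyConnected M) :
    ∃ r : ℝ, ∃ v : ι → ℝ, (∀ i, 0 < v i) ∧ M *ᵥ v = r • v := by
  obtain ⟨c, hc⟩ : ∃ c : ℝ, ∀ i, 0 < M i i + c := by
    obtain ⟨c, hc⟩ := (Set.finite_range fun i => -M i i).bddAbove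
    exact ⟨c + 1, fun i => by linarith [hc (Set.mem_range_self i)]⟩
  have hP (i j : ι) : (M + c • 1) i j = M i j + if i = j then c else 0 := by
    simp [one_apply]
  have hPnonneg (i j : ι) : 0 ≤ (M + c • 1) i j := by
    rcases eq_or_ne i j with rfl | hij
    · simpa [hP] using (hc i).le
    · simpa [hP, hij] using hM i j hij
  obtain ⟨K, hK⟩ := exists_pow_pos hPnonneg (fun i => by simpa [hP] using hc i)
    fun i j => Relation.ReflTransGen.mono (fun a b hab => by
      simpa [hP, hab.1.symm] using lt_of_le_of_ne (hM b a hab.1.symm) hab.2.symm) _ _ (hconn i j)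
  exact exists_pos_eigenvector_of_commute M hK
    (((Commute.refl M).add_right ((Commute.one_right M).smul_right c)).pow_right K)

end PerronFrobenius

section Dichotomy

variable {ι : Type*} [Fintype ι] [DecidableEq ι] {M : Matrix ι ι ℝ}

theorem not_isEigenvalue_zero_of_mulVec_neg (hM : ∀ i j, i ≠ j → 0 ≤ M i j) {v : ι → ℝ}
    (hv : ∀ i, 0 < v i) (hMv : ∀ i, (M *ᵥ v) i < 0) : ¬ IsEigenvalue M 0 := by
  rw [← Complex.ofReal_zero, isEigenvalue_ofReal_iff]
  rintro ⟨w, hw, hMw⟩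
  exact hw (mulVec_injective_of_pos_of_mulVec_neg hM hv hMv (by simpa using hMw))

theorem exists_pos_eigenvector_of_re_nonpos [Nonempty ι] (hM : ∀ i j, i ≠ j → 0 ≤ M i j)
    (hconn : IsStronglyConnected M) (hre : ∀ z, IsEigenvalue M z → z.re ≤ 0) :
    ∃ r : ℝ, r ≤ 0 ∧ ∃ v : ι → ℝ, (∀ i, 0 < v i) ∧ M *ᵥ v = r • v := by
  obtain ⟨r, v, hv, hMv⟩ := exists_pos_eigenvector hM hconn
  have hv0 : v ≠ 0 := Function.ne_iff.2 ⟨Classical.arbitrary ι, (hv _).ne'⟩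
  exact ⟨r, by simpa using hre r ((isEigenvalue_ofReal_iff M r).2 ⟨v, hv0, hMv⟩), v, hv, hMv⟩

theorem exists_pos_mulVec_eq_zero [Nonempty ι] (hM : ∀ i j, i ≠ j → 0 ≤ M i j)
    (hconn : IsStronglyConnected M) (hre : ∀ z, IsEigenvalue M z → z.re ≤ 0)
    (h0 : IsEigenvalue M 0) : ∃ v : ι → ℝ, (∀ i, 0 < v i) ∧ M *ᵥ v = 0 := by
  obtain ⟨r, hr, v, hv, hMv⟩ := exists_pos_eigenvector_of_re_nonpos hM hconn hre
  obtain rfl : r = 0 := hr.antisymm <| not_lt.1 fun hr' => not_isEigenvalue_zero_of_mulVec_neg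
    hM hv (fun i => by simpa [hMv] using mul_neg_of_neg_of_pos hr' (hv i)) h0
  exact ⟨v, hv, by simpa using hMv⟩

theorem exists_pos_mulVec_neg [Nonempty ι] (hM : ∀ i j, i ≠ j → 0 ≤ M i j)
    (hconn : IsStronglyConnected M) (hre : ∀ z, IsEigenvalue M z → z.re ≤ 0)
    (h0 : ¬ IsEigenvalue M 0) : ∃ v : ι → ℝ, (∀ i, 0 < v i) ∧ ∀ i, (M *ᵥ v) i < 0 := by
  obtain ⟨r, hr, v, hv, hMv⟩ := exists_pos_eigenvector_of_re_nonpos hM hconn hre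
  have hr' : r ≠ 0 := by
    rintro rfl
    exact h0 ((isEigenvalue_ofReal_iff M 0).2
      ⟨v, Function.ne_iff.2 ⟨Classical.arbitrary ι, (hv _).ne'⟩, hMv⟩)
  exact ⟨v, hv, fun i => by simpa [hMv] using mul_neg_of_neg_of_pos (hr.lt_of_ne hr') (hv i)⟩

end Dichotomy

section DependenceGraph

variable {n : ℕ} {A : Matrix (Fin n) (Fin n) ℝ}

theorem Metzler.pos_of_reaches (hA : Metzler A) {m : Fin n → ℝ} (hm : NonnegFixedPoint A m)
    {i j : Fin n} (hij : Reaches A i j) (hi : 0 < m i) : 0 < m j := by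
  induction hij with
  | refl => exact hi
  | @tail b c _ hbc ih =>
    refine (hm.1 c).lt_of_ne fun hc => ?_
    have := single_le_mulVec_apply_of_eq_zero hA hm.1 hc.symm b
    rw [hm.2, Pi.zero_apply] at this
    exact (mul_pos ((hA c b hbc.1.symm).lt_of_ne hbc.2.symm) ih).not_ge this

theorem mulVec_apply_eq_zero_of_forall_not_edge {U : Set (Fin n)} {x : Fin n → ℝ}
    (hx : ∀ j ∉ U, x j = 0) {i : Fin n} (hi : i ∉ U) (hU : ∀ j ∈ U, ¬ Edge A j i) :
    (A *ᵥ x) i = 0 := by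
  simp only [mulVec, dotProduct]
  refine Finset.sum_eq_zero fun j _ => ?_
  by_cases hj : j ∈ U
  · have : A i j = 0 := not_not.1 fun h => hU j hj ⟨fun hji => hi (hji ▸ hj), h⟩
    simp [this]
  · simp [hx j hj]

theorem exists_sink (A : Matrix (Fin n) (Fin n) ℝ) {W : Set (Fin n)} (hW : W.Nonempty) :
    ∃ i ∈ W, ∀ j ∈ W, Reaches A i j → Reaches A j i := by
  obtain ⟨i, hi, hmin⟩ := W.toFinite.exists_minimalFor (fun i => {j | Reaches A i j}) W hW
  exact ⟨i, hi, fun j hj hij =>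
    hmin hj (fun k hk => Relation.ReflTransGen.trans hij hk) Relation.ReflTransGen.refl⟩

theorem IsSCC.nonempty {C : Set (Fin n)} (hC : IsSCC A C) : C.Nonempty := by
  obtain ⟨c, rfl⟩ := hC
  exact ⟨c, Relation.ReflTransGen.refl, Relation.ReflTransGen.refl⟩

theorem IsSCC.reaches {C : Set (Fin n)} (hC : IsSCC A C) {i j : Fin n} (hi : i ∈ C)
    (hj : j ∈ C) : Reaches A i j := by
  obtain ⟨c, rfl⟩ := hC
  exact Relation.ReflTransGen.trans hi.2 hj.1

theorem IsSCC.mem_of_reaches {C : Set (Fin n)} (hC : IsSCC A C) {i j : Fin n} (hi : i ∈ C)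
    (hij : Reaches A i j) (hji : Reaches A j i) : j ∈ C := by
  obtain ⟨c, rfl⟩ := hC
  exact ⟨Relation.ReflTransGen.trans hi.1 hij, Relation.ReflTransGen.trans hji hi.2⟩

theorem IsSCC.isStronglyConnected_block {C : Set (Fin n)} (hC : IsSCC A C) :
    IsStronglyConnected (block A C) := by
  rintro ⟨a, ha⟩ ⟨b, hb⟩
  -- a path from `a` to `b` never leaves the component
  have hpath : ∀ c, Reaches A c b → ∀ hc : c ∈ C,
      Relation.ReflTransGen (fun x y : C => x ≠ y ∧ block A C y x ≠ 0) ⟨c, hc⟩ ⟨b, hb⟩ := by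
    intro c h
    induction h using Relation.ReflTransGen.head_induction_on with
    | refl => exact fun _ => Relation.ReflTransGen.refl
    | head hcd hdb ih =>
      intro hc
      have hd := hC.mem_of_reaches hc (Relation.ReflTransGen.single hcd)
        (Relation.ReflTransGen.trans hdb (hC.reaches hb hc))
      have hedge : (⟨_, hc⟩ : C) ≠ ⟨_, hd⟩ ∧ block A C ⟨_, hd⟩ ⟨_, hc⟩ ≠ 0 :=
        ⟨fun h => hcd.1 (congrArg Subtype.val h), hcd.2⟩
      exact Relation.ReflTransGen.head hedge (ih hd)
  exact hpath a (hC.reaches ha hb) ha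

theorem mulVec_extend_apply {C : Set (Fin n)} (z : C → ℝ) {i : Fin n} (hi : i ∈ C) :
    (A *ᵥ Subtype.val.extend z 0) i = (block A C *ᵥ z) ⟨i, hi⟩ := by
  have hout (j : {j // j ∉ C}) : A i j * Subtype.val.extend z 0 j = 0 := by
    rw [Function.extend_val_apply' j.2, Pi.zero_apply, mul_zero]
  rw [mulVec, dotProduct, ← Fintype.sum_subtype_add_sum_subtype (· ∈ C)]
  simp only [hout, Finset.sum_const_zero, add_zero, Subtype.val_injective.extend_apply]
  rfl

end DependenceGraph

section FixedPoints

variable {n : ℕ} {A : Matrix (Fin n) (Fin n) ℝ}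

theorem Metzler.block_apply_nonneg (hA : Metzler A) (C : Set (Fin n)) :
    ∀ i j, i ≠ j → 0 ≤ block A C i j :=
  fun i j hij => hA i j (Subtype.val_injective.ne hij)

theorem extend_nonneg {C : Set (Fin n)} {z : C → ℝ} (hz : ∀ i, 0 ≤ z i) (i : Fin n) :
    0 ≤ Subtype.val.extend z 0 i := by
  by_cases hi : i ∈ C
  · rw [Function.extend_val_apply hi]
    exact hz _
  · rw [Function.extend_val_apply' hi]
    rfl

theorem exists_fixedPoint_on_critical (hA : Metzler A) {S : Set (Fin n)} (hS : IsSCC A S)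
    (hcrit : Critical A S) :
    ∃ x : Fin n → ℝ, (∀ i, 0 ≤ x i) ∧ (∀ i ∉ S, x i = 0) ∧ (∀ i ∈ S, (A *ᵥ x) i = 0) ∧
      ∀ i ∈ S, 0 < x i := by
  have := hS.nonempty.to_subtype
  obtain ⟨v, hv, hAv⟩ := exists_pos_mulVec_eq_zero (hA.block_apply_nonneg S)
    hS.isStronglyConnected_block hcrit.2 hcrit.1
  refine ⟨Subtype.val.extend v 0, extend_nonneg fun i => (hv i).le,
    fun i hi => Function.extend_val_apply' hi, fun i hi => ?_, fun i hi => ?_⟩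
  · rw [mulVec_extend_apply v hi, hAv, Pi.zero_apply]
  · rw [Function.extend_val_apply hi]
    exact hv _

theorem exists_extension_on_scc (hA : Metzler A) {C : Set (Fin n)} (hC : IsSCC A C)
    (hsup : ¬ SuperCritical A C) (hncrit : ¬ Critical A C) {x : Fin n → ℝ}
    (hx : ∀ i, 0 ≤ x i) (hxC : ∀ i ∈ C, x i = 0) :
    ∃ y : Fin n → ℝ, (∀ i, 0 ≤ y i) ∧ (∀ i ∉ C, y i = 0) ∧ ∀ i ∈ C, (A *ᵥ (x + y)) i = 0 := by
  have := hC.nonempty.to_subtype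
  have hre (z : ℂ) (hz : IsEigenvalue (block A C) z) : z.re ≤ 0 :=
    not_lt.1 fun h => hsup ⟨z, hz, h⟩
  obtain ⟨v, hv, hAv⟩ := exists_pos_mulVec_neg (hA.block_apply_nonneg C)
    hC.isStronglyConnected_block hre fun h0 => hncrit ⟨h0, hre⟩
  have hAx (i : C) : 0 ≤ (A *ᵥ x) i := by
    simpa [hxC i i.2] using single_le_mulVec_apply_of_eq_zero hA hx (hxC i i.2) i
  obtain ⟨z, hz, hAz⟩ := exists_nonneg_mulVec_eq (hA.block_apply_nonneg C) hv hAv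
    (b := fun i => -(A *ᵥ x) i) fun i => neg_nonpos.2 (hAx i)
  refine ⟨Subtype.val.extend z 0, extend_nonneg hz, fun i hi => Function.extend_val_apply' hi,
    fun i hi => ?_⟩
  rw [mulVec_add, Pi.add_apply, mulVec_extend_apply z hi, hAz, add_neg_cancel]

def reachableFrom (A : Matrix (Fin n) (Fin n) ℝ) (S : Set (Fin n)) : Set (Fin n) :=
  {i | ∃ s ∈ S, Reaches A s i}

theorem IsSCC.reaches_of_mem_reachableFrom {S : Set (Fin n)} (hS : IsSCC A S) {s i : Fin n}
    (hs : s ∈ S) (hi : i ∈ reachableFrom A S) : Reaches A s i := by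
  obtain ⟨t, ht, hti⟩ := hi
  exact Relation.ReflTransGen.trans (hS.reaches hs ht) hti

theorem exists_sink_scc {S U : Set (Fin n)} (hS : IsSCC A S) (hUR : U ⊆ reachableFrom A S)
    (hclosed : ∀ i ∈ reachableFrom A S, ∀ j ∈ U, Reaches A i j → i ∈ U) (hUS : ¬ U ⊆ S) :
    ∃ C, IsSCC A C ∧ C.Nonempty ∧ C ⊆ U ∧ (∀ i ∈ C, i ∉ S) ∧
      ∀ i ∈ C, ∀ j ∈ U, Reaches A i j → j ∈ C := by
  obtain ⟨c, ⟨hcU, hcS⟩, hsink⟩ := exists_sink A (Set.sdiff_nonempty.2 hUS)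
  -- vertices of `S` reach `c`, so only `U \ S` matters for being a sink
  have hsink' (j : Fin n) (hj : j ∈ U) (hcj : Reaches A c j) : j ∈ {j | Mutual A c j} := by
    by_cases hjS : j ∈ S
    · exact ⟨hcj, hS.reaches_of_mem_reachableFrom hjS (hUR hcU)⟩
    · exact ⟨hcj, hsink j ⟨hj, hjS⟩ hcj⟩
  have hC : IsSCC A {j | Mutual A c j} := ⟨c, rfl⟩
  refine ⟨_, hC, hC.nonempty, fun j hj => ?_, fun j hj hjS => ?_, fun i hi j hj hij => ?_⟩
  · obtain ⟨s, hs, hsc⟩ := hUR hcU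
    exact hclosed j ⟨s, hs, Relation.ReflTransGen.trans hsc hj.1⟩ c hcU hj.2
  · exact hcS (hS.mem_of_reaches hjS hj.2 hj.1)
  · exact hsink' j hj (Relation.ReflTransGen.trans hi.1 hij)

theorem exists_fixedPoint_on (hA : Metzler A)
    (hsup : ∀ T : Set (Fin n), IsSCC A T → ¬ SuperCritical A T)
    {S : Set (Fin n)} (hS : IsSCC A S) (hcrit : Critical A S)
    (hfinal : ∀ T : Set (Fin n), IsSCC A T → Critical A T → T ≠ S → ¬ Upstream A S T)
    (U : Set (Fin n)) (hSU : S ⊆ U) (hUR : U ⊆ reachableFrom A S)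
    (hclosed : ∀ i ∈ reachableFrom A S, ∀ j ∈ U, Reaches A i j → i ∈ U) :
    ∃ x : Fin n → ℝ, (∀ i, 0 ≤ x i) ∧ (∀ i ∉ U, x i = 0) ∧ (∀ i ∈ U, (A *ᵥ x) i = 0) ∧
      ∃ s ∈ S, 0 < x s := by
  induction U using WellFoundedLT.induction with | _ U ih
  by_cases hUS : U ⊆ S
  · obtain rfl := hUS.antisymm hSU
    obtain ⟨x, hx, hxU, hAx, hpos⟩ := exists_fixedPoint_on_critical hA hS hcrit
    obtain ⟨s, hs⟩ := hS.nonempty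
    exact ⟨x, hx, hxU, hAx, s, hs, hpos s hs⟩
  -- remove a sink component `C` of `U`; it lies downstream of `S`, hence is not critical
  obtain ⟨C, hC, ⟨c, hc⟩, hCU, hCS, hsink⟩ := exists_sink_scc hS hUR hclosed hUS
  obtain ⟨x, hx, hxU, hAx, s, hs, hxs⟩ := ih (U \ C)
    (Set.sdiff_ssubset_left_iff.2 ⟨c, hCU hc, hc⟩) (fun i hi => ⟨hSU hi, fun hiC => hCS i hiC hi⟩)
    (fun i hi => hUR hi.1)
    (fun i hi j hj hij => ⟨hclosed i hi j hj.1 hij, fun hiC => hj.2 (hsink i hiC j hj.1 hij)⟩)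
  have hncrit : ¬ Critical A C := fun hcrit' => hfinal C hC hcrit'
    (fun h => hCS c hc (h ▸ hc)) ⟨s, hs, c, hc, hS.reaches_of_mem_reachableFrom hs (hUR (hCU hc))⟩
  obtain ⟨y, hy, hyC, hAxy⟩ := exists_extension_on_scc hA hC (hsup C hC) hncrit hx
    fun i hi => hxU i fun h => h.2 hi
  refine ⟨x + y, fun i => add_nonneg (hx i) (hy i), fun i hi => ?_, fun i hi => ?_,
    s, hs, add_pos_of_pos_of_nonneg hxs (hy s)⟩
  · simp [hxU i fun h => hi h.1, hyC i fun h => hi (hCU h)]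
  by_cases hiC : i ∈ C
  · exact hAxy i hiC
  rw [mulVec_add, Pi.add_apply, hAx i ⟨hi, hiC⟩, zero_add]
  exact mulVec_apply_eq_zero_of_forall_not_edge hyC hiC fun j hj hji =>
    hiC (hsink j hj i hi (Relation.ReflTransGen.single hji))

end FixedPoints

theorem exists_fixedPoint_positive_on_reachable_general (n : ℕ)
    (A : Matrix (Fin n) (Fin n) ℝ) (hA : Metzler A)
    (hsup : ∀ S : Set (Fin n), IsSCC A S → ¬ SuperCritical A S)
    (S : Set (Fin n)) (hS : IsSCC A S) (hcrit : Critical A S)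
    (hfinal : ∀ T : Set (Fin n), IsSCC A T → Critical A T → T ≠ S → ¬ Upstream A S T) :
    ∃ m : Fin n → ℝ, NonnegFixedPoint A m ∧
      ∀ i : Fin n, (0 < m i ↔ ∃ s ∈ S, Reaches A s i) := by
  obtain ⟨x, hx, hxR, hAx, s, hs, hxs⟩ := exists_fixedPoint_on hA hsup hS hcrit hfinal
    (reachableFrom A S) (fun s hs => ⟨s, hs, Relation.ReflTransGen.refl⟩) subset_rfl
    fun i hi _ _ _ => hi
  -- `x` lives on the reachable set, and no edge leaves it
  have hfix : NonnegFixedPoint A x := ⟨hx, funext fun i => by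
    by_cases hi : i ∈ reachableFrom A S
    · exact hAx i hi
    · exact mulVec_apply_eq_zero_of_forall_not_edge hxR hi fun j ⟨t, ht, htj⟩ hji =>
        hi ⟨t, ht, Relation.ReflTransGen.tail htj hji⟩⟩
  refine ⟨x, hfix, fun i => ⟨fun hi => not_not.1 fun h => hi.ne' (hxR i h), ?_⟩⟩
  rintro ⟨t, ht, hti⟩
  exact hA.pos_of_reaches hfix (Relation.ReflTransGen.trans (hS.reaches hs ht) hti) hxs

/-- for a final critical SCC `S` (no super-critical SCCs, and no other
critical SCC downstream of `S`), there is a nonnegative fixed point which is strictly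
positive exactly on the vertices reachable from `S`. -/
theorem exists_fixedPoint_positive_on_reachable (n : ℕ) (hn : 1 ≤ n)
    (A : Matrix (Fin n) (Fin n) ℝ) (hA : Metzler A)
    (hsup : ∀ S : Set (Fin n), IsSCC A S → ¬ SuperCritical A S)
    (S : Set (Fin n)) (hS : IsSCC A S) (hcrit : Critical A S)
    (hfinal : ∀ T : Set (Fin n), IsSCC A T → Critical A T → T ≠ S → ¬ Upstream A S T) :
    ∃ m : Fin n → ℝ, NonnegFixedPoint A m ∧
      ∀ i : Fin n, (0 < m i ↔ ∃ s ∈ S, Reaches A s i) :=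
  exists_fixedPoint_positive_on_reachable_general n A hA hsup S hS hcrit hfinal
end
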